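/- arXiv:2007.00460 — 9 statements merged into one kernel-verified Lean document; each statement's English description precedes it below -/
import Mathlib

section
/- Let H be a real Hilbert space, T : H → H a nonexpansive mapping with a fixed point y, λ : [0,∞) → [0,1] Lebesgue measurable, and x : [0,∞) → H a continuously differentiable solution of ẋ(t) = λ(t)(T(x(t)) − x(t)). Then for every t ≥ 0, (d/dt)‖x(t) − y‖² + λ(t)(1−λ(t))‖T(x(t)) − x(t)‖² + ‖ẋ(t)‖² ≤ 0. In particular, t ↦ ‖x(t) − y‖ is nonincreasing. -/
/-!
Write `u = T x - x` and `v = x - y`. Since `T y = y`, nonexpansiveness gives `‖u + v‖ ≤ ‖v‖`,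
i.e. `‖u‖² + 2⟪u, v⟫ ≤ 0`. Along the trajectory `ẋ = λ u`, the derivative of `‖x - y‖²` is
`2λ⟪v, u⟫`, and adding `λ(1 - λ)‖u‖² + ‖λ u‖²` turns it exactly into `λ (‖u‖² + 2⟪u, v⟫) ≤ 0`.
Monotonicity of the distance then follows from the mean value theorem.
-/

open Set
open scoped RealInnerProductSpace

theorem norm_sq_add_two_inner_nonpos_of_norm_add_le {E : Type*} [NormedAddCommGroup E]
    [InnerProductSpace ℝ E] {u v : E} (h : ‖u + v‖ ≤ ‖v‖) : ‖u‖ ^ 2 + 2 * ⟪u, v⟫ ≤ 0 := by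
  have := pow_le_pow_left₀ (norm_nonneg _) h 2
  rw [norm_add_sq_real] at this
  linarith

theorem two_inner_smul_add_norm_sq_nonpos_of_norm_add_le {E : Type*} [NormedAddCommGroup E]
    [InnerProductSpace ℝ E] {u v : E} {l : ℝ} (hl : 0 ≤ l) (h : ‖u + v‖ ≤ ‖v‖) :
    2 * ⟪v, l • u⟫ + l * (1 - l) * ‖u‖ ^ 2 + ‖l • u‖ ^ 2 ≤ 0 := by
  have hu := norm_sq_add_two_inner_nonpos_of_norm_add_le h
  calc 2 * ⟪v, l • u⟫ + l * (1 - l) * ‖u‖ ^ 2 + ‖l • u‖ ^ 2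
      = l * (‖u‖ ^ 2 + 2 * ⟪u, v⟫) := by
        rw [inner_smul_right, norm_smul, Real.norm_of_nonneg hl, real_inner_comm]; ring
    _ ≤ 0 := mul_nonpos_of_nonneg_of_nonpos hl hu

theorem antitoneOn_Ici_of_hasDerivAt_nonpos {f f' : ℝ → ℝ} {a : ℝ}
    (hf : ∀ t ≥ a, HasDerivAt f (f' t) t) (hf' : ∀ t ≥ a, f' t ≤ 0) : AntitoneOn f (Ici a) :=
  antitoneOn_of_hasDerivWithinAt_nonpos (convex_Ici a)
    (fun t ht => (hf t ht).continuousAt.continuousWithinAt)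
    (fun t ht => (hf t (interior_subset ht)).hasDerivWithinAt)
    (fun t ht => hf' t (interior_subset ht))

theorem stmt0_general
    {H : Type*} [NormedAddCommGroup H] [InnerProductSpace ℝ H]
    (T : H → H) (hT : ∀ a b : H, ‖T a - T b‖ ≤ ‖a - b‖)
    (y : H) (hy : T y = y)
    (lam : ℝ → ℝ)
    (hlam : ∀ t ≥ (0:ℝ), lam t ∈ Icc (0:ℝ) 1)
    (x xd : ℝ → H)
    (hx : ∀ t ≥ (0:ℝ), HasDerivAt x (xd t) t)
    (hode : ∀ t ≥ (0:ℝ), xd t = lam t • (T (x t) - x t)) :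
    (∀ t ≥ (0:ℝ), ∀ D : ℝ, HasDerivAt (fun s => ‖x s - y‖ ^ 2) D t →
      D + lam t * (1 - lam t) * ‖T (x t) - x t‖ ^ 2 + ‖xd t‖ ^ 2 ≤ 0) ∧
    AntitoneOn (fun t => ‖x t - y‖) (Ici 0) := by
  have hderiv : ∀ t ≥ (0:ℝ),
      HasDerivAt (fun s => ‖x s - y‖ ^ 2) (2 * ⟪x t - y, xd t⟫) t :=
    fun t ht => ((hx t ht).sub_const y).norm_sq
  have hbound : ∀ t ≥ (0:ℝ), 2 * ⟪x t - y, xd t⟫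
      + lam t * (1 - lam t) * ‖T (x t) - x t‖ ^ 2 + ‖xd t‖ ^ 2 ≤ 0 := by
    intro t ht
    have hfix : ‖(T (x t) - x t) + (x t - y)‖ ≤ ‖x t - y‖ := by
      simpa only [sub_add_sub_cancel, hy] using hT (x t) y
    rw [hode t ht]
    exact two_inner_smul_add_norm_sq_nonpos_of_norm_add_le (hlam t ht).1 hfix
  refine ⟨fun t ht D hD => hD.unique (hderiv t ht) ▸ hbound t ht, ?_⟩
  have hsq : AntitoneOn (fun t => ‖x t - y‖ ^ 2) (Ici 0) := by
    refine antitoneOn_Ici_of_hasDerivAt_nonpos hderiv fun t ht => ?_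
    have hl := hlam t ht
    have : 0 ≤ lam t * (1 - lam t) * ‖T (x t) - x t‖ ^ 2 :=
      mul_nonneg (mul_nonneg hl.1 (sub_nonneg.2 hl.2)) (sq_nonneg _)
    linarith [hbound t ht, sq_nonneg ‖xd t‖]
  exact fun a ha b hb hab =>
    (pow_le_pow_iff_left₀ (norm_nonneg _) (norm_nonneg _) two_ne_zero).1 (hsq ha hb hab)

/-- Decrease of the distance to a fixed point along the continuous
Krasnosel'skiĭ–Mann dynamics `ẋ(t) = λ(t)(T(x(t)) − x(t))`. -/
theorem stmt0
    {H : Type*} [NormedAddCommGroup H] [InnerProductSpace ℝ H]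
    (T : H → H) (hT : ∀ a b : H, ‖T a - T b‖ ≤ ‖a - b‖)
    (y : H) (hy : T y = y)
    (lam : ℝ → ℝ) (hlam_meas : Measurable lam)
    (hlam : ∀ t ≥ (0:ℝ), lam t ∈ Icc (0:ℝ) 1)
    (x xd : ℝ → H) (x₀ : H) (hx0 : x 0 = x₀)
    (hx : ∀ t ≥ (0:ℝ), HasDerivAt x (xd t) t)
    (hode : ∀ t ≥ (0:ℝ), xd t = lam t • (T (x t) - x t)) :
    (∀ t ≥ (0:ℝ), ∀ D : ℝ, HasDerivAt (fun s => ‖x s - y‖ ^ 2) D t →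
      D + lam t * (1 - lam t) * ‖T (x t) - x t‖ ^ 2 + ‖xd t‖ ^ 2 ≤ 0) ∧
    AntitoneOn (fun t => ‖x t - y‖) (Ici 0) :=
  stmt0_general T hT y hy lam hlam x xd hx hode
end

section
/- Let H be a real Hilbert space, T : H → H nonexpansive, λ : [0,∞) → [0,1] measurable, and x a solution of ẋ(t) = λ(t)(T(x(t)) − x(t)). Then the function t ↦ ‖T(x(t)) − x(t)‖ is nonincreasing on [0,∞); more precisely, for almost every t, (d/dt)(½‖T(x(t)) − x(t)‖²) ≤ −λ(t)‖T(x(t)) − x(t)‖² + ‖ẋ(t)‖·‖T(x(t)) − x(t)‖ ≤ 0. -/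
/-!
Write `r = T ∘ x - x`. Since `ẋ(t) = λ(t) r(t)`, for small `h > 0` we have
`x(t+h) - x(t) = hλ(t) r(t) + o(h)`, hence
`r(t+h) = (T x(t+h) - T x(t)) + (1 - hλ(t)) r(t) + o(h)`, and nonexpansiveness gives
`‖r(t+h)‖ ≤ ‖r(t)‖ + o(h)`. A continuous function whose upper right Dini derivative is
nonpositive is nonincreasing. So `½‖r‖²` is nonincreasing and its derivative is `≤ 0`, which is
the claimed bound because `‖ẋ‖ = λ‖r‖` makes the right-hand side vanish.
-/

open Filter MeasureTheory Set
open scoped Topology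

theorem accPt_Ici (t : ℝ) : AccPt t (𝓟 (Ici t)) := by
  rw [accPt_principal_iff_nhdsWithin, Ici_sdiff_left]
  infer_instance

theorem antitoneOn_of_eventually_le_add_mul_sub {f : ℝ → ℝ} {s : Set ℝ} (hs : s.OrdConnected)
    (hf : ContinuousOn f s)
    (h : ∀ t ∈ s, ∀ ε > 0, ∀ᶠ z in 𝓝[>] t, f z ≤ f t + ε * (z - t)) : AntitoneOn f s := by
  intro a ha b hb hab
  refine image_le_of_liminf_slope_right_le_deriv_boundary (hf.mono (hs.out ha hb)) le_rfl
    (B := fun _ ↦ f a) (B' := fun _ ↦ 0) continuousOn_const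
    (fun _ _ ↦ hasDerivWithinAt_const _ _ _) ?_ ⟨hab, le_rfl⟩
  intro t ht r hr
  obtain ⟨ε, hε, hεr⟩ := exists_between hr
  have hts : t ∈ s := hs.out ha hb (Ico_subset_Icc_self ht)
  refine (((h t hts ε hε).and self_mem_nhdsWithin).mono ?_).frequently
  rintro z ⟨hz, hzt : t < z⟩
  rw [slope_def_field, div_lt_iff₀ (sub_pos.2 hzt)]
  nlinarith

theorem eventually_norm_residual_le {E : Type*} [NormedAddCommGroup E] [NormedSpace ℝ E]
    {T : E → E} (hT : ∀ a b, ‖T a - T b‖ ≤ ‖a - b‖) {x : ℝ → E} {c t : ℝ} (hc : 0 ≤ c)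
    (hx : HasDerivWithinAt x (c • (T (x t) - x t)) (Ici t) t) {ε : ℝ} (hε : 0 < ε) :
    ∀ᶠ z in 𝓝[>] t, ‖T (x z) - x z‖ ≤ ‖T (x t) - x t‖ + ε * (z - t) := by
  have hsmall : ∀ᶠ z in 𝓝[>] t, (z - t) * c ≤ 1 := by
    have : Tendsto (fun z ↦ (z - t) * c) (𝓝 t) (𝓝 0) :=
      ((continuous_sub_right t).mul continuous_const).tendsto' t 0 (by simp)
    exact (this.mono_left nhdsWithin_le_nhds).eventually (eventually_le_nhds one_pos)
  have hrem := ((hasDerivWithinAt_iff_isLittleO.1 hx).def (half_pos hε)).filter_mono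
    (nhdsWithin_mono _ Ioi_subset_Ici_self)
  filter_upwards [hsmall, hrem, self_mem_nhdsWithin] with z hzc hz (hzt : t < z)
  set r := T (x t) - x t
  set ρ := x z - x t - (z - t) • c • r
  have hρ : ‖ρ‖ ≤ ε / 2 * (z - t) := by
    simpa [Real.norm_eq_abs, abs_of_pos (sub_pos.2 hzt)] using hz
  have hh : 0 ≤ (z - t) * c := mul_nonneg (sub_pos.2 hzt).le hc
  have hdx : ‖x z - x t‖ ≤ (z - t) * c * ‖r‖ + ‖ρ‖ := by
    calc ‖x z - x t‖ = ‖((z - t) * c) • r + ρ‖ := by rw [mul_smul]; simp [ρ]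
      _ ≤ _ := by
        grw [norm_add_le, norm_smul, Real.norm_of_nonneg hh]
  have hrest : ‖r - (x z - x t)‖ ≤ (1 - (z - t) * c) * ‖r‖ + ‖ρ‖ := by
    calc ‖r - (x z - x t)‖ = ‖(1 - (z - t) * c) • r - ρ‖ := by
          rw [sub_smul, one_smul, mul_smul]; simp only [ρ]; abel_nf
      _ ≤ _ := by
        grw [norm_sub_le, norm_smul, Real.norm_of_nonneg (sub_nonneg.2 hzc)]
  calc ‖T (x z) - x z‖ = ‖(T (x z) - T (x t)) + (r - (x z - x t))‖ := by simp only [r]; abel_nf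
    _ ≤ ‖x z - x t‖ + ‖r - (x z - x t)‖ := by grw [norm_add_le, hT]
    _ ≤ ‖r‖ + ε * (z - t) := by linarith

theorem stmt1_general
    {H : Type*} [NormedAddCommGroup H] [InnerProductSpace ℝ H]
    (T : H → H) (hT : ∀ a b : H, ‖T a - T b‖ ≤ ‖a - b‖)
    (lam : ℝ → ℝ)
    (hlam : ∀ t ≥ (0:ℝ), lam t ∈ Icc (0:ℝ) 1)
    (x xd : ℝ → H)
    (hx : ∀ t ≥ (0:ℝ), HasDerivAt x (xd t) t)
    (hode : ∀ t ≥ (0:ℝ), xd t = lam t • (T (x t) - x t)) :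
    AntitoneOn (fun t => ‖T (x t) - x t‖) (Ici 0) ∧
    ∀ᵐ t ∂(volume.restrict (Ici (0:ℝ))),
      ∀ D : ℝ, HasDerivAt (fun s => (1/2) * ‖T (x s) - x s‖ ^ 2) D t →
        D ≤ -(lam t) * ‖T (x t) - x t‖ ^ 2 + ‖xd t‖ * ‖T (x t) - x t‖ ∧
        -(lam t) * ‖T (x t) - x t‖ ^ 2 + ‖xd t‖ * ‖T (x t) - x t‖ ≤ 0 := by
  have hxc : ContinuousOn x (Ici 0) := fun t ht ↦ (hx t ht).continuousAt.continuousWithinAt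
  have hTc : Continuous T := (LipschitzWith.mk_one (by simpa [dist_eq_norm] using hT)).continuous
  have hanti : AntitoneOn (fun t ↦ ‖T (x t) - x t‖) (Ici 0) :=
    antitoneOn_of_eventually_le_add_mul_sub ordConnected_Ici
      ((hTc.comp_continuousOn hxc).sub hxc).norm fun t ht _ hε ↦
        eventually_norm_residual_le hT (hlam t ht).1 (hode t ht ▸ hx t ht).hasDerivWithinAt hε
  refine ⟨hanti, ae_restrict_of_forall_mem measurableSet_Ici fun t (ht : 0 ≤ t) D hD ↦ ?_⟩
  have hsq : AntitoneOn (fun s ↦ (1/2) * ‖T (x s) - x s‖ ^ 2) (Ici t) := fun a ha b hb hab ↦ by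
    have := hanti (ht.trans ha) (ht.trans hb) hab
    dsimp only at this ⊢
    gcongr
  have hD : D ≤ 0 := hD.hasDerivWithinAt.nonpos_of_antitoneOn (accPt_Ici t) hsq
  have hrhs : -(lam t) * ‖T (x t) - x t‖ ^ 2 + ‖xd t‖ * ‖T (x t) - x t‖ = 0 := by
    rw [hode t ht, norm_smul, Real.norm_of_nonneg (hlam t ht).1]
    ring
  rw [hrhs]
  exact ⟨hD, le_rfl⟩

/-- The fixed point residual `t ↦ ‖T(x(t)) − x(t)‖` is nonincreasing along the
continuous Krasnosel'skiĭ–Mann dynamics; more precisely, a.e.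
`(d/dt)(½‖T(x(t))−x(t)‖²) ≤ −λ(t)‖T(x(t))−x(t)‖² + ‖ẋ(t)‖·‖T(x(t))−x(t)‖ ≤ 0`. -/
theorem stmt1
    {H : Type*} [NormedAddCommGroup H] [InnerProductSpace ℝ H]
    (T : H → H) (hT : ∀ a b : H, ‖T a - T b‖ ≤ ‖a - b‖)
    (lam : ℝ → ℝ) (hlam_meas : Measurable lam)
    (hlam : ∀ t ≥ (0:ℝ), lam t ∈ Icc (0:ℝ) 1)
    (x xd : ℝ → H)
    (hx : ∀ t ≥ (0:ℝ), HasDerivAt x (xd t) t)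
    (hode : ∀ t ≥ (0:ℝ), xd t = lam t • (T (x t) - x t))
    (hTd : ∀ᵐ t ∂(volume.restrict (Ici (0:ℝ))),
      ∃ u : H, HasDerivAt (fun s => T (x s)) u t ∧ ‖u‖ ≤ ‖xd t‖) :
    AntitoneOn (fun t => ‖T (x t) - x t‖) (Ici 0) ∧
    ∀ᵐ t ∂(volume.restrict (Ici (0:ℝ))),
      ∀ D : ℝ, HasDerivAt (fun s => (1/2) * ‖T (x s) - x s‖ ^ 2) D t →
        D ≤ -(lam t) * ‖T (x t) - x t‖ ^ 2 + ‖xd t‖ * ‖T (x t) - x t‖ ∧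
        -(lam t) * ‖T (x t) - x t‖ ^ 2 + ‖xd t‖ * ‖T (x t) - x t‖ ≤ 0 :=
  stmt1_general T hT lam hlam x xd hx hode
end

section
/- Let 1 ≤ p < ∞, let F : [0,∞) → [0,∞) be locally absolutely continuous with F ∈ Lᵖ([0,∞)), and let G : [0,∞) → ℝ with G ∈ Lʳ([0,∞)) for some 1 ≤ r ≤ ∞, such that F'(t) ≤ G(t) for almost all t. Then lim_{t→∞} F(t) = 0. -/
open Filter MeasureTheory Set Topology

/-!
Write `‖G‖ ≤ h + C` with `0 ≤ h ∈ L¹` (take `h = ‖G‖ ^ r, C = 1` for finite `r` and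
`h = 0, C = ‖G‖_∞` for `r = ∞`). Then `F` increases over `[s, t]` by at most `∫ₛᵗ h + C (t - s)`.
On windows `[t - δ, t]` with `C δ < ε / 3` and `t` large, `∫ h < ε / 3`, so `F t ≥ ε` forces
`F ≥ ε / 3` on the whole window and `∫_{t-δ}^t F ^ p ≥ (ε / 3) ^ p δ`. But these window integrals
of the integrable function `F ^ p` tend to `0`.
-/

theorem MeasureTheory.MemLp.exists_integrable_norm_le_add_const {α E : Type*} [MeasurableSpace α]
    {μ : Measure α} [NormedAddCommGroup E] {G : α → E} {r : ENNReal} (hG : MemLp G r μ)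
    (hr : 1 ≤ r) :
    ∃ h : α → ℝ, ∃ C : ℝ, 0 ≤ C ∧ (∀ x, 0 ≤ h x) ∧ Integrable h μ ∧
      ∀ᵐ x ∂μ, ‖G x‖ ≤ h x + C := by
  rcases eq_or_ne r ⊤ with rfl | hr_top
  · have hbdd : IsBoundedUnder (· ≤ ·) (ae μ) fun x => ‖G x‖₊ :=
      eLpNormEssSup_lt_top_iff_isBoundedUnder.1 (by simpa using hG.eLpNorm_lt_top)
    obtain ⟨C, hC⟩ := hbdd
    refine ⟨0, C, C.2, fun _ => le_rfl, integrable_zero _ _ _, ?_⟩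
    filter_upwards [eventually_map.1 hC] with x hx
    simpa using (NNReal.coe_le_coe.2 hx)
  · have hr_toReal : 1 ≤ r.toReal := by
      simpa using ENNReal.toReal_mono hr_top hr
    refine ⟨fun x => ‖G x‖ ^ r.toReal, 1, zero_le_one, fun x => by positivity,
      hG.integrable_norm_rpow (one_pos.trans_le hr).ne' hr_top, ae_of_all _ fun x => ?_⟩
    rcases le_total ‖G x‖ 1 with h1 | h1
    · have : 0 ≤ ‖G x‖ ^ r.toReal := by positivity
      linarith
    · linarith [Real.self_le_rpow_of_one_le h1 hr_toReal]

theorem MeasureTheory.IntegrableOn.intervalIntegrable_of_Ici {E : Type*} [NormedAddCommGroup E]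
    {f : ℝ → E} {a b c : ℝ} (hf : IntegrableOn f (Ici a)) (hb : a ≤ b) (hc : a ≤ c) :
    IntervalIntegrable f volume b c :=
  (hf.mono_set fun _ hx => (le_min hb hc).trans hx.1).intervalIntegrable

theorem tendsto_intervalIntegral_sub_atTop {E : Type*} [NormedAddCommGroup E] [NormedSpace ℝ E]
    {f : ℝ → E} {a : ℝ} (hf : IntegrableOn f (Ici a)) (δ : ℝ) :
    Tendsto (fun t => ∫ x in t - δ..t, f x) atTop (𝓝 0) := by
  have hf' : IntegrableOn f (Ioi a) := hf.mono_set Ioi_subset_Ici_self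
  have hlim := (intervalIntegral_tendsto_integral_Ioi a hf' tendsto_id).sub
    (intervalIntegral_tendsto_integral_Ioi a hf' (tendsto_atTop_add_const_right _ (-δ) tendsto_id))
  rw [sub_self] at hlim
  refine hlim.congr' ?_
  filter_upwards [eventually_ge_atTop (a + |δ|)] with t ht
  have h1 : a ≤ t := by linarith [abs_nonneg δ]
  have h2 : a ≤ t - δ := by linarith [le_abs_self δ]
  exact intervalIntegral.integral_interval_sub_left (hf.intervalIntegrable_of_Ici le_rfl h1)
    (hf.intervalIntegrable_of_Ici le_rfl h2)

theorem sub_le_intervalIntegral_add_mul {F F' h : ℝ → ℝ} {a C : ℝ}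
    (hF_fund : ∀ t ≥ a, F t = F a + ∫ s in a..t, F' s)
    (hF'loc : ∀ b ≥ a, IntervalIntegrable F' volume a b)
    (hh : IntegrableOn h (Ici a)) (hdom : ∀ᵐ x ∂volume.restrict (Ici a), F' x ≤ h x + C)
    {s t : ℝ} (hs : a ≤ s) (hst : s ≤ t) :
    F t - F s ≤ (∫ x in s..t, h x) + C * (t - s) := by
  have ht : a ≤ t := hs.trans hst
  have hhi : IntervalIntegrable h volume s t := hh.intervalIntegrable_of_Ici hs ht
  calc F t - F s = ∫ x in s..t, F' x := by
        rw [hF_fund t ht, hF_fund s hs, add_sub_add_left_eq_sub,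
          intervalIntegral.integral_interval_sub_left (hF'loc t ht) (hF'loc s hs)]
    _ ≤ ∫ x in s..t, (h x + C) :=
        intervalIntegral.integral_mono_ae_restrict hst
          ((hF'loc s hs).symm.trans (hF'loc t ht)) (hhi.add intervalIntegrable_const)
          (ae_restrict_of_ae_restrict_of_subset (fun x hx => hs.trans hx.1) hdom)
    _ = (∫ x in s..t, h x) + C * (t - s) := by
        rw [intervalIntegral.integral_add hhi intervalIntegrable_const,
          intervalIntegral.integral_const, smul_eq_mul, mul_comm]

theorem tendsto_zero_of_integrableOn_rpow_of_sub_le {F h : ℝ → ℝ} {a p C : ℝ} (hp : 0 < p)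
    (hC : 0 ≤ C) (hFnn : ∀ t ≥ a, 0 ≤ F t) (hFp : IntegrableOn (fun t => ‖F t‖ ^ p) (Ici a))
    (hh0 : ∀ x, 0 ≤ h x) (hh : IntegrableOn h (Ici a))
    (hinc : ∀ s t, a ≤ s → s ≤ t → F t - F s ≤ (∫ x in s..t, h x) + C * (t - s)) :
    Tendsto F atTop (𝓝 0) := by
  refine tendsto_order.2 ⟨fun b hb => eventually_atTop.2 ⟨a, fun t ht => hb.trans_le (hFnn t ht)⟩,
    fun ε hε => ?_⟩
  obtain ⟨δ, hδ, hCδ⟩ := exists_pos_mul_lt (by positivity : 0 < ε / 3) C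
  have hmass : 0 < (ε / 3) ^ p * δ := by positivity
  filter_upwards [(tendsto_intervalIntegral_sub_atTop hFp δ).eventually (gt_mem_nhds hmass),
    (tendsto_intervalIntegral_sub_atTop hh δ).eventually (gt_mem_nhds (by positivity : 0 < ε / 3)),
    eventually_ge_atTop (a + δ)] with t hF_tail hh_tail ht
  by_contra! hFt
  have hta : a ≤ t - δ := by linarith
  have hlow : ∀ s ∈ Icc (t - δ) t, (ε / 3) ^ p ≤ ‖F s‖ ^ p := by
    rintro s ⟨hs₁, hs₂⟩
    have hinc_s := hinc s t (hta.trans hs₁) hs₂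
    have hh_s : (∫ x in s..t, h x) ≤ ∫ x in t - δ..t, h x :=
      intervalIntegral.integral_mono_interval hs₁ hs₂ le_rfl (ae_of_all _ hh0)
        (hh.intervalIntegrable_of_Ici hta (by linarith))
    have hCs : C * (t - s) ≤ C * δ := mul_le_mul_of_nonneg_left (by linarith) hC
    exact Real.rpow_le_rpow (by positivity) ((by linarith : ε / 3 ≤ F s).trans (le_abs_self _))
      hp.le
  have : (ε / 3) ^ p * δ ≤ ∫ x in t - δ..t, ‖F x‖ ^ p := by
    simpa [mul_comm] using intervalIntegral.integral_mono_on (by linarith) intervalIntegrable_const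
      (hFp.intervalIntegrable_of_Ici hta (by linarith)) hlow
  linarith

theorem stmt4_general
    (p : ℝ) (hp : 1 ≤ p) (r : ENNReal) (hr : 1 ≤ r)
    (F F' G : ℝ → ℝ)
    (hFnn : ∀ t ≥ (0:ℝ), 0 ≤ F t)
    (hF_fund : ∀ t ≥ (0:ℝ), F t = F 0 + ∫ s in (0:ℝ)..t, F' s)
    (hF'loc : ∀ b ≥ (0:ℝ), IntervalIntegrable F' volume 0 b)
    (hFp : MemLp F (ENNReal.ofReal p) (volume.restrict (Ici (0:ℝ))))
    (hG : MemLp G r (volume.restrict (Ici (0:ℝ))))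
    (hle : ∀ᵐ t ∂(volume.restrict (Ici (0:ℝ))), F' t ≤ G t) :
    Tendsto F atTop (𝓝 0) := by
  have hp0 : 0 < p := one_pos.trans_le hp
  obtain ⟨h, C, hC, hh0, hh, hG_le⟩ := hG.exists_integrable_norm_le_add_const hr
  have hdom : ∀ᵐ x ∂volume.restrict (Ici 0), F' x ≤ h x + C := by
    filter_upwards [hle, hG_le] with x hx hGx
    exact hx.trans ((le_abs_self _).trans hGx)
  have hFp' : IntegrableOn (fun t => ‖F t‖ ^ p) (Ici 0) := by
    have := hFp.integrable_norm_rpow (by simpa using hp0) ENNReal.ofReal_ne_top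
    rwa [ENNReal.toReal_ofReal hp0.le] at this
  exact tendsto_zero_of_integrableOn_rpow_of_sub_le hp0 hC hFnn hFp' hh0 hh
    fun s t hs hst => sub_le_intervalIntegral_add_mul hF_fund hF'loc hh hdom hs hst

/-- If `F : [0,∞) → [0,∞)` is locally absolutely continuous, `F ∈ Lᵖ([0,∞))`
with `1 ≤ p < ∞`, and `F'(t) ≤ G(t)` a.e. with `G ∈ Lʳ([0,∞))`, `1 ≤ r ≤ ∞`,
then `F(t) → 0` as `t → ∞`. -/
theorem stmt4
    (p : ℝ) (hp : 1 ≤ p) (r : ENNReal) (hr : 1 ≤ r)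
    (F F' G : ℝ → ℝ)
    (hFnn : ∀ t ≥ (0:ℝ), 0 ≤ F t)
    (hF_fund : ∀ t ≥ (0:ℝ), F t = F 0 + ∫ s in (0:ℝ)..t, F' s)
    (hF'loc : ∀ b ≥ (0:ℝ), IntervalIntegrable F' volume 0 b)
    (hF_deriv : ∀ᵐ t ∂(volume.restrict (Ici (0:ℝ))), HasDerivAt F (F' t) t)
    (hFp : MemLp F (ENNReal.ofReal p) (volume.restrict (Ici (0:ℝ))))
    (hG : MemLp G r (volume.restrict (Ici (0:ℝ))))
    (hle : ∀ᵐ t ∂(volume.restrict (Ici (0:ℝ))), F' t ≤ G t) :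
    Tendsto F atTop (𝓝 0) :=
  stmt4_general p hp r hr F F' G hFnn hF_fund hF'loc hFp hG hle
end

section
/- Convergence rate for the continuous Krasnosel'skiĭ–Mann dynamics: Let T : H → H be nonexpansive with Fix T ≠ ∅, λ : [0,∞) → (0,1) measurable with 0 < inf_{t≥0} λ(t) ≤ sup_{t≥0} λ(t) < 1, and x the solution of ẋ(t) = λ(t)(T(x(t)) − x(t)). Set τ̲ = inf_{t≥0} λ(t)(1−λ(t)) > 0. Then for all t ≥ 0, t·‖ẋ(t)‖² ≤ t·‖T(x(t)) − x(t)‖² ≤ (2/τ̲) ∫_{t/2}^{t} λ(s)(1−λ(s))‖T(x(s)) − x(s)‖² ds, and the right-hand side integral tends to 0 as t → ∞. -/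
open Filter MeasureTheory Set Topology
open scoped RealInnerProductSpace

/-! Over a short time step `h` the trajectory is, up to `o(h)`, the Krasnosel'skiĭ–Mann step
`p + c • (T p - p)` with `c = h λ ∈ [0, 1]`, and such a step does not increase the residual
`‖T p - p‖` of a nonexpansive map; hence `t ↦ ‖T (x t) - x t‖` is nonincreasing. For a fixed
point `y`, `‖x t - y‖²` has derivative `2 λ ⟪T x - x, x - y⟫ ≤ -λ ‖T x - x‖²`, so the weighted
residual `λ (1 - λ) ‖T x - x‖²` is integrable on `[0, ∞)`. By monotonicity,
`(t / 2) τ̲ ‖T (x t) - x t‖²` is bounded by its integral over `[t / 2, t]`, a tail of a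
convergent integral. -/

theorem antitoneOn_of_forall_eventually_le_add_mul {f : ℝ → ℝ} {s : Set ℝ} [s.OrdConnected]
    (hf : ContinuousOn f s)
    (h : ∀ u ∈ s, ∀ ε > 0, ∀ᶠ z in 𝓝[>] u, f z ≤ f u + ε * (z - u)) :
    AntitoneOn f s := by
  intro u hu v hv huv
  have hIcc : Icc u v ⊆ s := Set.OrdConnected.out ‹_› hu hv
  refine image_le_of_liminf_slope_right_le_deriv_boundary (B := fun _ => f u)
    (B' := fun _ => 0) (hf.mono hIcc) le_rfl continuousOn_const
    (fun z _ => hasDerivWithinAt_const z _ (f u)) (fun z hz r hr => ?_) (right_mem_Icc.2 huv)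
  refine Eventually.frequently ?_
  filter_upwards [h z (hIcc (Ico_subset_Icc_self hz)) (r / 2) (half_pos hr), self_mem_nhdsWithin]
    with w hw (hzw : z < w)
  rw [slope_def_field, div_lt_iff₀ (sub_pos.2 hzw)]
  nlinarith [sub_pos.2 hzw]

theorem tendsto_intervalIntegral_zero_of_integrableOn_Ioi {ι E : Type*} [NormedAddCommGroup E]
    [NormedSpace ℝ E] {μ : Measure ℝ} {l : Filter ι} [l.IsCountablyGenerated] {f : ℝ → E}
    {a : ℝ} (hf : IntegrableOn f (Ioi a) μ) {u v : ι → ℝ} (hu : Tendsto u l atTop)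
    (hv : Tendsto v l atTop) : Tendsto (fun i => ∫ s in u i..v i, f s ∂μ) l (𝓝 0) := by
  have hint {c : ℝ} (hc : a ≤ c) : IntervalIntegrable f μ a c :=
    (intervalIntegrable_iff_integrableOn_Ioc_of_le hc).2 (hf.mono_set Ioc_subset_Ioi_self)
  have hlim := (intervalIntegral_tendsto_integral_Ioi a hf hv).sub
    (intervalIntegral_tendsto_integral_Ioi a hf hu)
  rw [sub_self] at hlim
  refine hlim.congr' ?_
  filter_upwards [hu.eventually_ge_atTop a, hv.eventually_ge_atTop a] with i hui hvi
  exact intervalIntegral.integral_interval_sub_left (hint hvi) (hint hui)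

theorem mul_sq_le_integral_of_antitoneOn {k w : ℝ → ℝ} {κ t : ℝ} (hw : AntitoneOn w (Ici 0))
    (hw_nonneg : ∀ s, 0 ≤ w s) (hκ : 0 < κ) (hk : ∀ s ≥ (0:ℝ), κ ≤ k s) (ht : 0 ≤ t)
    (hint : IntervalIntegrable (fun s => k s * w s ^ 2) volume (t / 2) t) :
    t * w t ^ 2 ≤ 2 / κ * ∫ s in t / 2..t, k s * w s ^ 2 := by
  have hlower : ∀ s ∈ Icc (t / 2) t, κ * w t ^ 2 ≤ k s * w s ^ 2 := fun s hs => by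
    have hs0 : 0 ≤ s := by linarith [hs.1]
    have hsq : w t ^ 2 ≤ w s ^ 2 := pow_le_pow_left₀ (hw_nonneg t) (hw hs0 ht hs.2) 2
    nlinarith [hk s hs0, sq_nonneg (w t)]
  have hmono := intervalIntegral.integral_mono_on (by linarith) intervalIntegrable_const hint hlower
  rw [intervalIntegral.integral_const, smul_eq_mul] at hmono
  rw [div_mul_eq_mul_div, le_div_iff₀ hκ]
  nlinarith

theorem iInf_mul_one_sub_pos {ι : Type*} [Nonempty ι] {lam : ι → ℝ} {a b : ℝ} (ha : 0 < a)
    (hb : b < 1) (hbounds : ∀ i, a ≤ lam i ∧ lam i ≤ b) : 0 < ⨅ i, lam i * (1 - lam i) := by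
  refine (mul_pos ha (sub_pos.2 hb)).trans_le (le_ciInf fun i => ?_)
  obtain ⟨hai, hib⟩ := hbounds i
  nlinarith

theorem integrableOn_Icc_mul_sq_norm_sub_self {E : Type*} [NormedAddCommGroup E] {T : E → E}
    (hT : LipschitzWith 1 T) {lam : ℝ → ℝ} (hlam_meas : Measurable lam)
    (hlam : ∀ t ≥ (0:ℝ), lam t ∈ Icc (0:ℝ) 1) {x : ℝ → E} (hx : ContinuousOn x (Ici 0)) (r : ℝ) :
    IntegrableOn (fun s => lam s * (1 - lam s) * ‖T (x s) - x s‖ ^ 2) (Icc 0 r) := by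
  have hweight : IntegrableOn (fun s => lam s * (1 - lam s)) (Icc 0 r) := by
    refine Measure.integrableOn_of_bounded (M := 1) measure_Icc_lt_top.ne
      (hlam_meas.mul (measurable_const.sub hlam_meas)).aestronglyMeasurable
      (ae_restrict_of_forall_mem measurableSet_Icc fun s hs => ?_)
    obtain ⟨h0, h1⟩ := hlam s hs.1
    rw [Real.norm_of_nonneg (mul_nonneg h0 (sub_nonneg.2 h1))]
    nlinarith
  have hxr : ContinuousOn x (Icc 0 r) := hx.mono Icc_subset_Ici_self
  exact hweight.mul_continuousOn
    (((hT.continuous.comp_continuousOn hxr).sub hxr).norm.pow 2) isCompact_Icc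

section NormedSpace

variable {E : Type*} [NormedAddCommGroup E] [NormedSpace ℝ E] {T : E → E}

theorem LipschitzWith.norm_sub_self_le (hT : LipschitzWith 1 T) (p q : E) {c : ℝ}
    (hc : c ∈ Icc (0:ℝ) 1) : ‖T q - q‖ ≤ ‖T p - p‖ + 2 * ‖q - (p + c • (T p - p))‖ := by
  set e := q - (p + c • (T p - p))
  calc ‖T q - q‖ ≤ ‖T q - T p‖ + ‖T p - q‖ := norm_sub_le_norm_sub_add_norm_sub _ _ _
    _ ≤ ‖q - p‖ + ‖T p - q‖ := by gcongr; simpa using hT.norm_sub_le q p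
    _ = ‖c • (T p - p) + e‖ + ‖(1 - c) • (T p - p) - e‖ := by
        congr 2 <;> simp only [e] <;> module
    _ ≤ (‖c • (T p - p)‖ + ‖e‖) + (‖(1 - c) • (T p - p)‖ + ‖e‖) :=
        add_le_add (norm_add_le _ _) (_root_.norm_sub_le _ _)
    _ = ‖T p - p‖ + 2 * ‖e‖ := by
        rw [norm_smul, norm_smul, Real.norm_of_nonneg hc.1,
          Real.norm_of_nonneg (sub_nonneg.2 hc.2)]
        ring

theorem antitoneOn_norm_sub_self_of_hasDerivAt (hT : LipschitzWith 1 T) {lam : ℝ → ℝ}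
    (hlam : ∀ t ≥ (0:ℝ), 0 ≤ lam t) {x : ℝ → E}
    (hx : ∀ t ≥ (0:ℝ), HasDerivAt x (lam t • (T (x t) - x t)) t) :
    AntitoneOn (fun t => ‖T (x t) - x t‖) (Ici 0) := by
  have hxc : ContinuousOn x (Ici 0) := fun t ht => (hx t ht).continuousAt.continuousWithinAt
  refine antitoneOn_of_forall_eventually_le_add_mul
    ((hT.continuous.comp_continuousOn hxc).sub hxc).norm fun u hu ε hε => ?_
  have hlin := (hasDerivAt_iff_isLittleO.1 (hx u hu)).def (half_pos hε)
  have hstep : ∀ᶠ z in 𝓝 u, (z - u) * lam u < 1 :=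
    ContinuousAt.eventually_lt (by fun_prop) continuousAt_const (by simp)
  filter_upwards [nhdsWithin_le_nhds (hlin.and hstep), self_mem_nhdsWithin] with z ⟨hz, hz1⟩ huz
  have hzu : 0 < z - u := sub_pos.2 huz
  have hkm := hT.norm_sub_self_le (x u) (x z) ⟨mul_nonneg hzu.le (hlam u hu), hz1.le⟩
  rw [mul_smul, ← sub_sub] at hkm
  rw [Real.norm_of_nonneg hzu.le] at hz
  linarith

end NormedSpace

section InnerProductSpace

variable {H : Type*} [NormedAddCommGroup H] [InnerProductSpace ℝ H] {T : H → H}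

theorem two_mul_inner_sub_sub_le_neg_sq {p q y : H} (h : ‖q - y‖ ≤ ‖p - y‖) :
    2 * ⟪q - p, p - y⟫ ≤ -‖q - p‖ ^ 2 := by
  have hexp : ‖q - y‖ ^ 2 = ‖q - p‖ ^ 2 + 2 * ⟪q - p, p - y⟫ + ‖p - y‖ ^ 2 := by
    rw [← norm_add_sq_real, sub_add_sub_cancel]
  nlinarith [norm_nonneg (q - y)]

theorem integral_mul_sq_norm_sub_self_le (hT : LipschitzWith 1 T) {y : H} (hy : T y = y)
    {lam : ℝ → ℝ} (hlam : ∀ t ≥ (0:ℝ), 0 ≤ lam t) {x : ℝ → H}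
    (hx : ∀ t ≥ (0:ℝ), HasDerivAt x (lam t • (T (x t) - x t)) t) {r : ℝ} (hr : 0 ≤ r)
    (hint : IntegrableOn (fun s => lam s * (1 - lam s) * ‖T (x s) - x s‖ ^ 2) (Icc 0 r)) :
    ∫ s in 0..r, lam s * (1 - lam s) * ‖T (x s) - x s‖ ^ 2 ≤ ‖x 0 - y‖ ^ 2 := by
  have hdist (t : ℝ) (ht : 0 ≤ t) : HasDerivAt (fun s => -‖x s - y‖ ^ 2)
      (-(2 * ⟪x t - y, lam t • (T (x t) - x t)⟫)) t :=
    ((hx t ht).sub_const y).norm_sq.neg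
  have hcont : ContinuousOn (fun s => -‖x s - y‖ ^ 2) (Icc 0 r) :=
    fun t ht => (hdist t ht.1).continuousAt.continuousWithinAt
  have hle := intervalIntegral.integral_le_sub_of_hasDeriv_right_of_le hr hcont
    (fun t ht => (hdist t ht.1.le).hasDerivWithinAt) hint fun t ht => by
      have hfix : ‖T (x t) - y‖ ≤ ‖x t - y‖ := by simpa [hy] using hT.norm_sub_le (x t) y
      have hlam_t := hlam t ht.1.le
      rw [real_inner_smul_right, real_inner_comm]
      nlinarith [two_mul_inner_sub_sub_le_neg_sq hfix, sq_nonneg (lam t * ‖T (x t) - x t‖)]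
  nlinarith [sq_nonneg ‖x r - y‖]

theorem integrableOn_Ioi_mul_sq_norm_sub_self (hT : LipschitzWith 1 T) {y : H} (hy : T y = y)
    {lam : ℝ → ℝ} (hlam_meas : Measurable lam) (hlam : ∀ t ≥ (0:ℝ), lam t ∈ Icc (0:ℝ) 1)
    {x : ℝ → H} (hx : ∀ t ≥ (0:ℝ), HasDerivAt x (lam t • (T (x t) - x t)) t) :
    IntegrableOn (fun s => lam s * (1 - lam s) * ‖T (x s) - x s‖ ^ 2) (Ioi 0) := by
  have hloc := integrableOn_Icc_mul_sq_norm_sub_self hT hlam_meas hlam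
    fun t ht => (hx t ht).continuousAt.continuousWithinAt
  refine integrableOn_Ioi_of_intervalIntegral_norm_bounded (‖x 0 - y‖ ^ 2) 0
    (fun r => (hloc r).mono_set Ioc_subset_Icc_self) tendsto_id ?_
  filter_upwards [eventually_ge_atTop 0] with r hr
  refine le_of_eq_of_le (intervalIntegral.integral_congr fun s hs => ?_)
    (integral_mul_sq_norm_sub_self_le hT hy (fun t ht => (hlam t ht).1) hx hr (hloc r))
  rw [uIcc_of_le hr] at hs
  obtain ⟨h0, h1⟩ := hlam s hs.1
  exact Real.norm_of_nonneg (by have := sub_nonneg.2 h1; positivity)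

end InnerProductSpace

theorem stmt5_general
    {H : Type*} [NormedAddCommGroup H] [InnerProductSpace ℝ H]
    (T : H → H) (hT : ∀ a b : H, ‖T a - T b‖ ≤ ‖a - b‖)
    (hfix : ∃ y : H, T y = y)
    (lam : ℝ → ℝ) (hlam_meas : Measurable lam)
    (hlam : ∀ t ≥ (0:ℝ), lam t ∈ Ioo (0:ℝ) 1)
    (a b : ℝ) (ha : 0 < a) (hb : b < 1)
    (hbounds : ∀ t ≥ (0:ℝ), a ≤ lam t ∧ lam t ≤ b)
    (x xd : ℝ → H)
    (hx : ∀ t ≥ (0:ℝ), HasDerivAt x (xd t) t)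
    (hode : ∀ t ≥ (0:ℝ), xd t = lam t • (T (x t) - x t))
    (tl : ℝ) (htl : tl = ⨅ t : Ici (0:ℝ), lam t * (1 - lam t)) :
    0 < tl ∧
    (∀ t ≥ (0:ℝ),
      t * ‖xd t‖ ^ 2 ≤ t * ‖T (x t) - x t‖ ^ 2 ∧
      t * ‖T (x t) - x t‖ ^ 2 ≤
        (2 / tl) * ∫ s in (t/2)..t, lam s * (1 - lam s) * ‖T (x s) - x s‖ ^ 2) ∧
    Tendsto (fun t => ∫ s in (t/2)..t, lam s * (1 - lam s) * ‖T (x s) - x s‖ ^ 2)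
      atTop (𝓝 0) := by
  obtain ⟨y, hy⟩ := hfix
  have hTlip : LipschitzWith 1 T := .mk_one fun p q => by simpa [dist_eq_norm] using hT p q
  have hlam01 (t : ℝ) (ht : 0 ≤ t) : lam t ∈ Icc (0:ℝ) 1 := Ioo_subset_Icc_self (hlam t ht)
  have hkm (t : ℝ) (ht : 0 ≤ t) : HasDerivAt x (lam t • (T (x t) - x t)) t :=
    hode t ht ▸ hx t ht
  have htl_pos : 0 < tl := htl ▸ iInf_mul_one_sub_pos ha hb fun t => hbounds t t.2
  have htl_le (s : ℝ) (hs : 0 ≤ s) : tl ≤ lam s * (1 - lam s) := by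
    refine htl ▸ ciInf_le ⟨0, ?_⟩ (⟨s, hs⟩ : Ici (0:ℝ))
    rintro _ ⟨t, rfl⟩
    exact mul_nonneg (hlam01 t t.2).1 (sub_nonneg.2 (hlam01 t t.2).2)
  have hint := integrableOn_Ioi_mul_sq_norm_sub_self hTlip hy hlam_meas hlam01 hkm
  refine ⟨htl_pos, fun t ht => ⟨?_, ?_⟩, tendsto_intervalIntegral_zero_of_integrableOn_Ioi hint
    (tendsto_id.atTop_div_const two_pos) tendsto_id⟩
  · have hxd : ‖xd t‖ ≤ ‖T (x t) - x t‖ := by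
      rw [hode t ht, norm_smul, Real.norm_of_nonneg (hlam t ht).1.le]
      exact mul_le_of_le_one_left (norm_nonneg _) (hlam t ht).2.le
    gcongr
  · refine mul_sq_le_integral_of_antitoneOn
      (antitoneOn_norm_sub_self_of_hasDerivAt hTlip (fun t ht => (hlam t ht).1.le) hkm)
      (fun _ => norm_nonneg _) htl_pos htl_le ht ?_
    exact (intervalIntegrable_iff_integrableOn_Ioc_of_le (by linarith)).2
      (hint.mono_set fun s hs => (by linarith [hs.1] : (0:ℝ) < s))

/-- Convergence rate for the continuous Krasnosel'skiĭ–Mann dynamics: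
with `0 < inf λ ≤ sup λ < 1` and `τ̲ = inf_{t≥0} λ(t)(1−λ(t))` one has `τ̲ > 0` and
`t‖ẋ(t)‖² ≤ t‖T(x(t))−x(t)‖² ≤ (2/τ̲)∫_{t/2}^t λ(s)(1−λ(s))‖T(x(s))−x(s)‖² ds`,
and the right-hand side integral tends to `0`. -/
theorem stmt5
    {H : Type*} [NormedAddCommGroup H] [InnerProductSpace ℝ H] [CompleteSpace H]
    (T : H → H) (hT : ∀ a b : H, ‖T a - T b‖ ≤ ‖a - b‖)
    (hfix : ∃ y : H, T y = y)
    (lam : ℝ → ℝ) (hlam_meas : Measurable lam)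
    (hlam : ∀ t ≥ (0:ℝ), lam t ∈ Ioo (0:ℝ) 1)
    (a b : ℝ) (ha : 0 < a) (hb : b < 1)
    (hbounds : ∀ t ≥ (0:ℝ), a ≤ lam t ∧ lam t ≤ b)
    (x xd : ℝ → H) (x₀ : H) (hx0 : x 0 = x₀)
    (hx : ∀ t ≥ (0:ℝ), HasDerivAt x (xd t) t)
    (hode : ∀ t ≥ (0:ℝ), xd t = lam t • (T (x t) - x t))
    (tl : ℝ) (htl : tl = ⨅ t : Ici (0:ℝ), lam t * (1 - lam t)) :
    0 < tl ∧
    (∀ t ≥ (0:ℝ),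
      t * ‖xd t‖ ^ 2 ≤ t * ‖T (x t) - x t‖ ^ 2 ∧
      t * ‖T (x t) - x t‖ ^ 2 ≤
        (2 / tl) * ∫ s in (t/2)..t, lam s * (1 - lam s) * ‖T (x s) - x s‖ ^ 2) ∧
    Tendsto (fun t => ∫ s in (t/2)..t, lam s * (1 - lam s) * ‖T (x s) - x s‖ ^ 2)
      atTop (𝓝 0) :=
  stmt5_general T hT hfix lam hlam_meas hlam a b ha hb hbounds x xd hx hode tl htl
end

section
/- Gradient-descent differential inequality for the continuous forward–backward flow: Let f : H → ℝ ∪ {+∞} be proper, convex, lower semicontinuous, g : H → ℝ convex differentiable with (1/β)-Lipschitz gradient, γ > 0 with (γ/β)(3 + γ/β) ≤ 1, and let x solve ẋ(t) + x(t) = prox_{γf}(x(t) − γ∇g(x(t))). Let x* be a minimizer of f + g. Then for almost every t ≥ 0, (f+g)(x*) ≥ (f+g)(ẋ(t)+x(t)) + (1/(2γ))‖ẋ(t)‖² + (1/(2γ))(d/dt)‖x(t) − x*‖². -/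
open Filter MeasureTheory Set Topology
open scoped RealInnerProductSpace

/-!
Test the prox inequality at `y = x*` and add two bounds on `g`: from above by the descent lemma
along the step from `x` to `ẋ + x`, from below by convexity at `x`. The gradient terms cancel,
the step-size condition forces `γ ≤ β` so that the descent-lemma term `‖ẋ‖² / (2β)` is absorbed
by `‖ẋ‖² / (2γ)`, and the prox term leaves `−⟪x − x*, ẋ⟫ / γ − ‖ẋ‖² / γ`, where
`2⟪x − x*, ẋ⟫` is the derivative of `‖x − x*‖²`.
-/

section

variable {H : Type*} [NormedAddCommGroup H] [InnerProductSpace ℝ H] [CompleteSpace H]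
  {g : H → ℝ} {g' : H → H} {L : ℝ}

theorem descent_lemma (hg : ∀ z, HasGradientAt g (g' z) z)
    (hg_lip : ∀ a b, ‖g' a - g' b‖ ≤ L * ‖a - b‖) (v u : H) :
    g u ≤ g v + ⟪g' v, u - v⟫ + L / 2 * ‖u - v‖ ^ 2 := by
  set w := u - v
  have hline : ∀ s : ℝ, HasDerivAt (fun s : ℝ => g (v + s • w)) ⟪g' (v + s • w), w⟫ s :=
    fun s => (hg _).hasFDerivAt.comp_hasDerivAt s
      (by simpa using ((hasDerivAt_id s).smul_const w).const_add v)
  have hbound : ∀ s : ℝ, 0 ≤ s → ⟪g' (v + s • w), w⟫ ≤ ⟪g' v, w⟫ + L * ‖w‖ ^ 2 * s := by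
    intro s hs
    calc ⟪g' (v + s • w), w⟫ = ⟪g' v, w⟫ + ⟪g' (v + s • w) - g' v, w⟫ := by
          rw [inner_sub_left]; ring
      _ ≤ ⟪g' v, w⟫ + L * ‖(v + s • w) - v‖ * ‖w‖ := by
          gcongr
          exact (real_inner_le_norm _ _).trans
            (mul_le_mul_of_nonneg_right (hg_lip _ _) (norm_nonneg _))
      _ = ⟪g' v, w⟫ + L * ‖w‖ ^ 2 * s := by
          rw [add_sub_cancel_left, norm_smul, Real.norm_of_nonneg hs]; ring
  have hB : ∀ s : ℝ, HasDerivAt (fun s : ℝ => g v + ⟪g' v, w⟫ * s + L / 2 * ‖w‖ ^ 2 * s ^ 2)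
      (⟪g' v, w⟫ + L * ‖w‖ ^ 2 * s) s := by
    intro s
    have := (((hasDerivAt_id s).const_mul ⟪g' v, w⟫).const_add (g v)).add
      ((hasDerivAt_pow 2 s).const_mul (L / 2 * ‖w‖ ^ 2))
    exact this.congr_deriv (by norm_num; ring)
  have := image_le_of_deriv_right_le_deriv_boundary
    (fun s _ => (hline s).continuousAt.continuousWithinAt)
    (fun s _ => (hline s).hasDerivWithinAt) (by simp)
    (fun s _ => (hB s).continuousAt.continuousWithinAt)
    (fun s _ => (hB s).hasDerivWithinAt) (fun s hs => hbound s hs.1)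
    (right_mem_Icc.2 zero_le_one)
  simpa [w] using this

theorem forward_backward_step_le {f : H → ℝ} {γ : ℝ}
    (hg : ∀ z, HasGradientAt g (g' z) z) (hg_cvx : ∀ a b, g a + ⟪g' a, b - a⟫ ≤ g b)
    (hg_lip : ∀ a b, ‖g' a - g' b‖ ≤ L * ‖a - b‖) (hLγ : L ≤ 1 / γ) {p d : H}
    (hprox : ∀ y, f (d + p) + ⟪-((1 / γ) • d) - g' p, y - (d + p)⟫ ≤ f y) (z : H) :
    f (d + p) + g (d + p) + 1 / (2 * γ) * ‖d‖ ^ 2 + 1 / (2 * γ) * (2 * ⟪p - z, d⟫)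
      ≤ f z + g z := by
  have hf := hprox z
  have hg_below := hg_cvx p z
  have hg_above := descent_lemma hg hg_lip p (d + p)
  rw [add_sub_cancel_right] at hg_above
  have hinner : ⟪-((1 / γ) • d) - g' p, z - (d + p)⟫
      = 1 / γ * (‖d‖ ^ 2 + ⟪d, p - z⟫) - ⟪g' p, z - p⟫ + ⟪g' p, d⟫ := by
    rw [show z - (d + p) = -(p - z) - d by abel]
    simp only [inner_sub_left, inner_sub_right, inner_neg_left, inner_neg_right,
      real_inner_smul_left, real_inner_self_eq_norm_sq]
    ring
  have hhalf : 1 / (2 * γ) = 1 / γ / 2 := by ring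
  have hquad : L / 2 * ‖d‖ ^ 2 ≤ 1 / γ / 2 * ‖d‖ ^ 2 :=
    mul_le_mul_of_nonneg_right (by linarith) (sq_nonneg _)
  rw [hinner] at hf
  rw [hhalf, real_inner_comm]
  linarith

end

theorem stmt11_general
    {H : Type*} [NormedAddCommGroup H] [InnerProductSpace ℝ H] [CompleteSpace H]
    (f : H → ℝ)
    (g : H → ℝ) (g' : H → H)
    (hg_diff : ∀ z : H, HasGradientAt g (g' z) z)
    (hg_cvx : ∀ a b : H, g a + ⟪g' a, b - a⟫ ≤ g b)
    (β : ℝ) (hβ : 0 < β)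
    (hg_lip : ∀ a b : H, ‖g' a - g' b‖ ≤ (1/β) * ‖a - b‖)
    (γ : ℝ) (hγ : 0 < γ) (hstep : (γ/β) * (3 + γ/β) ≤ 1)
    (x xd : ℝ → H)
    (hx : ∀ t ≥ (0:ℝ), HasDerivAt x (xd t) t)
    (hprox : ∀ t ≥ (0:ℝ), ∀ y : H,
      f (xd t + x t) + ⟪-((1/γ) • xd t) - g' (x t), y - (xd t + x t)⟫ ≤ f y)
    (xstar : H) :
    ∀ᵐ t ∂(volume.restrict (Ici (0:ℝ))),
      ∀ D : ℝ, HasDerivAt (fun s => ‖x s - xstar‖ ^ 2) D t →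
        f (xd t + x t) + g (xd t + x t) + (1/(2*γ)) * ‖xd t‖ ^ 2 +
          (1/(2*γ)) * D ≤ f xstar + g xstar := by
  have hγβ : γ ≤ β := by
    have : γ / β ≤ 1 := by nlinarith [div_pos hγ hβ]
    exact (div_le_one hβ).mp this
  filter_upwards [ae_restrict_mem measurableSet_Ici] with t ht D hD
  rw [hD.unique ((hx t ht).sub_const xstar).norm_sq]
  exact forward_backward_step_le hg_diff hg_cvx hg_lip (one_div_le_one_div_of_le hγ hγβ)
    (hprox t ht) xstar

/-- Gradient-descent differential inequality for the continuous forward–backward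
flow `ẋ(t) + x(t) = prox_{γf}(x(t) − γ∇g(x(t)))`.  The prox equation is encoded
by its exact subdifferential characterization
`−(1/γ)ẋ(t) − ∇g(x(t)) ∈ ∂f(ẋ(t) + x(t))`.  For a minimizer `x*` of `f + g` and
almost every `t ≥ 0`:
`(f+g)(x*) ≥ (f+g)(ẋ(t)+x(t)) + (1/(2γ))‖ẋ(t)‖² + (1/(2γ))(d/dt)‖x(t) − x*‖²`. -/
theorem stmt11
    {H : Type*} [NormedAddCommGroup H] [InnerProductSpace ℝ H] [CompleteSpace H]
    (f : H → ℝ) (hf_cvx : ConvexOn ℝ Set.univ f) (hf_lsc : LowerSemicontinuous f)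
    (g : H → ℝ) (g' : H → H)
    (hg_diff : ∀ z : H, HasGradientAt g (g' z) z)
    (hg_cvx : ∀ a b : H, g a + ⟪g' a, b - a⟫ ≤ g b)
    (β : ℝ) (hβ : 0 < β)
    (hg_lip : ∀ a b : H, ‖g' a - g' b‖ ≤ (1/β) * ‖a - b‖)
    (γ : ℝ) (hγ : 0 < γ) (hstep : (γ/β) * (3 + γ/β) ≤ 1)
    (x xd : ℝ → H)
    (hx : ∀ t ≥ (0:ℝ), HasDerivAt x (xd t) t)
    (hprox : ∀ t ≥ (0:ℝ), ∀ y : H,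
      f (xd t + x t) + ⟪-((1/γ) • xd t) - g' (x t), y - (xd t + x t)⟫ ≤ f y)
    (xstar : H) (hmin : ∀ y : H, f xstar + g xstar ≤ f y + g y) :
    ∀ᵐ t ∂(volume.restrict (Ici (0:ℝ))),
      ∀ D : ℝ, HasDerivAt (fun s => ‖x s - xstar‖ ^ 2) D t →
        f (xd t + x t) + g (xd t + x t) + (1/(2*γ)) * ‖xd t‖ ^ 2 +
          (1/(2*γ)) * D ≤ f xstar + g xstar :=
  stmt11_general f g g' hg_diff hg_cvx β hβ hg_lip γ hγ hstep x xd hx hprox xstar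
end

section
/- O(1/T) rate for the continuous forward–backward flow: Under the assumptions that f : H → ℝ∪{+∞} is proper convex lsc, g : H → ℝ is convex with (1/β)-Lipschitz gradient, argmin(f+g) ≠ ∅, the step size γ > 0 satisfies (γ/β)(3 + γ/β) ≤ 1, and x solves ẋ(t) + x(t) = prox_{γf}(x(t) − γ∇g(x(t))) with x(0) = x₀, then for every T > 0 and every minimizer x* of f+g: 0 ≤ (f+g)(ẋ(T) + x(T)) − (f+g)(x*) + (1/(2γ))‖ẋ(T)‖² ≤ (1/(2γT))‖x₀ − x*‖². -/
/-!
Write `L = 1/β` and `u = x + ẋ`, so that `u(t)` is the forward–backward point of `x(t)`.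
Monotonicity of `∂f` and the Lipschitz bound on `∇g` make `u` depend `(1 + γL)`-Lipschitz on
`x`; in particular `u` and `ẋ` are continuous. The Lyapunov function
`Ψ(t) = t ((f+g)(u) − (f+g)(x*) + ‖ẋ‖²/(2γ)) + ‖x − x*‖²/(2γ)`
is then nonincreasing: the subgradient inequalities for `f` at `u` and for `g` bound the difference
quotients of `Ψ`, and in the limit its upper right Dini derivative is at most
`(t (L(1 + γL) − 1/γ) + L − 1/(2γ)) ‖ẋ‖²`, which the step-size condition makes nonpositive.
Hence `T ((f+g)(u(T)) − (f+g)(x*) + ‖ẋ(T)‖²/(2γ)) ≤ Ψ(T) ≤ Ψ(0) = ‖x₀ − x*‖²/(2γ)`.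
-/

open Filter MeasureTheory Set Topology
open scoped RealInnerProductSpace

theorem ContinuousOn.of_norm_sub_le {α E F : Type*} [TopologicalSpace α]
    [SeminormedAddCommGroup E] [SeminormedAddCommGroup F] {S : Set α} {x : α → E} {u : α → F}
    {C : ℝ} (hx : ContinuousOn x S) (h : ∀ s ∈ S, ∀ t ∈ S, ‖u t - u s‖ ≤ C * ‖x t - x s‖) :
    ContinuousOn u S := by
  intro s hs
  rw [ContinuousWithinAt, tendsto_iff_norm_sub_tendsto_zero]
  refine squeeze_zero_norm' ?_
    (by simpa using (tendsto_iff_norm_sub_tendsto_zero.1 (hx s hs)).const_mul C)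
  filter_upwards [self_mem_nhdsWithin] with t ht
  rw [norm_norm]
  exact h s hs t ht

theorem le_of_forall_eventually_slope_lt {Ψ : ℝ → ℝ} {a b : ℝ} (hab : a ≤ b)
    (hΨ : ContinuousOn Ψ (Icc a b))
    (h : ∀ s ∈ Ico a b, ∀ r > 0, ∀ᶠ t in 𝓝[>] s, slope Ψ s t < r) : Ψ b ≤ Ψ a :=
  image_le_of_liminf_slope_right_le_deriv_boundary (B := fun _ => Ψ a) (B' := fun _ => 0) hΨ
    le_rfl continuousOn_const (fun t _ => hasDerivWithinAt_const t _ (Ψ a))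
    (fun s hs r hr => (h s hs r hr).frequently) (right_mem_Icc.2 hab)

section ForwardBackward

variable {H : Type*} [NormedAddCommGroup H] [InnerProductSpace ℝ H]

def HasSubgradientAt (f : H → ℝ) (ζ p : H) : Prop :=
  ∀ y, f p + ⟪ζ, y - p⟫ ≤ f y

theorem HasSubgradientAt.sub_le_inner {f : H → ℝ} {ζ p : H} (h : HasSubgradientAt f ζ p)
    (y : H) : f p - f y ≤ ⟪ζ, p - y⟫ := by
  have := h y
  rw [← neg_sub, inner_neg_right] at this
  linarith

theorem HasSubgradientAt.inner_sub_nonneg {f : H → ℝ} {ζ ζ' p p' : H}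
    (h : HasSubgradientAt f ζ p) (h' : HasSubgradientAt f ζ' p') : 0 ≤ ⟪ζ - ζ', p - p'⟫ := by
  have h₁ := h.sub_le_inner p'
  have h₂ := h'.sub_le_inner p
  rw [← neg_sub p p', inner_neg_right] at h₂
  rw [inner_sub_left]
  linarith

theorem continuousOn_comp_of_hasSubgradientAt {α : Type*} [TopologicalSpace α] {S : Set α}
    {f : H → ℝ} {u ζ : α → H} (hsub : ∀ t ∈ S, HasSubgradientAt f (ζ t) (u t))
    (hu : ContinuousOn u S) (hζ : ContinuousOn ζ S) : ContinuousOn (fun t => f (u t)) S := by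
  intro s hs
  rw [ContinuousWithinAt, tendsto_iff_norm_sub_tendsto_zero]
  have hbound : ∀ t ∈ S, ‖f (u t) - f (u s)‖ ≤ (‖ζ t‖ + ‖ζ s‖) * ‖u t - u s‖ := by
    intro t ht
    have h₁ := (hsub t ht).sub_le_inner (u s)
    have h₂ := (hsub s hs).sub_le_inner (u t)
    have b₁ := real_inner_le_norm (ζ t) (u t - u s)
    have b₂ := real_inner_le_norm (ζ s) (u s - u t)
    rw [norm_sub_rev (u s)] at b₂
    rw [Real.norm_eq_abs, abs_le]
    constructor <;> nlinarith [norm_nonneg (ζ t), norm_nonneg (ζ s), norm_nonneg (u t - u s)]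
  have hlim : Tendsto (fun t => (‖ζ t‖ + ‖ζ s‖) * ‖u t - u s‖) (𝓝[S] s) (𝓝 0) := by
    simpa using ((hζ s hs).tendsto.norm.add tendsto_const_nhds).mul
      (tendsto_iff_norm_sub_tendsto_zero.1 (hu s hs))
  refine squeeze_zero_norm' ?_ hlim
  filter_upwards [self_mem_nhdsWithin] with t ht
  rw [norm_norm]
  exact hbound t ht

theorem norm_sq_sub_norm_sq_le_two_inner (v w : H) : ‖v‖ ^ 2 - ‖w‖ ^ 2 ≤ 2 * ⟪v, v - w⟫ := by
  have := norm_sub_sq_real v (v - w)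
  rw [sub_sub_cancel] at this
  nlinarith [sq_nonneg ‖v - w‖]

/-- `p = prox_{γf}(a - γ g'(a))`, expressed through the optimality condition of the prox. -/
def IsForwardBackwardStep (f : H → ℝ) (g' : H → H) (γ : ℝ) (a p : H) : Prop :=
  HasSubgradientAt f ((1 / γ) • (a - p) - g' a) p

variable {f g : H → ℝ} {g' : H → H} {L γ : ℝ} {a a' p p' : H}

theorem IsForwardBackwardStep.norm_sub_le (h : IsForwardBackwardStep f g' γ a p)
    (h' : IsForwardBackwardStep f g' γ a' p') (hlip : ∀ a b, ‖g' a - g' b‖ ≤ L * ‖a - b‖)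
    (hγ : 0 < γ) : ‖p - p'‖ ≤ (1 + γ * L) * ‖a - a'‖ := by
  have hmono := HasSubgradientAt.inner_sub_nonneg h h'
  have hζ : (1 / γ) • (a - p) - g' a - ((1 / γ) • (a' - p') - g' a')
      = (1 / γ) • ((a - a') - (p - p')) - (g' a - g' a') := by module
  rw [hζ, inner_sub_left, real_inner_smul_left, inner_sub_left, real_inner_self_eq_norm_sq]
    at hmono
  have hsq : ‖p - p'‖ ^ 2 ≤ ⟪a - a', p - p'⟫ - γ * ⟪g' a - g' a', p - p'⟫ := by
    have := mul_le_mul_of_nonneg_left hmono hγ.le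
    field_simp at this
    linarith
  have hcs₁ := real_inner_le_norm (a - a') (p - p')
  have hcs₂ := abs_real_inner_le_norm (g' a - g' a') (p - p')
  have hsq' : ‖p - p'‖ ^ 2 ≤ (‖a - a'‖ + γ * ‖g' a - g' a'‖) * ‖p - p'‖ := by
    nlinarith [(abs_le.1 hcs₂).1]
  have hbound : ‖p - p'‖ ≤ ‖a - a'‖ + γ * ‖g' a - g' a'‖ := by
    nlinarith [norm_nonneg (a - a'), mul_nonneg hγ.le (norm_nonneg (g' a - g' a'))]
  nlinarith [hlip a a']

theorem IsForwardBackwardStep.energy_sub_le (h : IsForwardBackwardStep f g' γ a p)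
    (h' : IsForwardBackwardStep f g' γ a' p') (hgsub : ∀ a, HasSubgradientAt g (g' a) a)
    (hlip : ∀ a b, ‖g' a - g' b‖ ≤ L * ‖a - b‖) (hγ : 0 < γ) :
    f p + g p + 1 / (2 * γ) * ‖p - a‖ ^ 2 - (f p' + g p' + 1 / (2 * γ) * ‖p' - a'‖ ^ 2)
      ≤ L * (1 + γ * L) * (‖p - a‖ * ‖a - a'‖) - 1 / γ * ⟪p - a, a - a'⟫ := by
  have hf := h.sub_le_inner p'
  have hg := (hgsub p).sub_le_inner p'
  have hsq := norm_sq_sub_norm_sq_le_two_inner (p - a) (p' - a')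
  have hlin : ⟪(1 / γ) • (a - p) - g' a, p - p'⟫ + ⟪g' p, p - p'⟫
        + 1 / γ * ⟪p - a, p - a - (p' - a')⟫
      = ⟪g' p - g' a, p - p'⟫ - 1 / γ * ⟪p - a, a - a'⟫ := by
    rw [show p - p' = (p - a - (p' - a')) + (a - a') by abel, show a - p = -(p - a) by abel]
    simp only [inner_add_right, inner_sub_left, inner_neg_left, real_inner_smul_left]
    ring
  have hcross : ⟪g' p - g' a, p - p'⟫ ≤ L * (1 + γ * L) * (‖p - a‖ * ‖a - a'‖) :=
    calc ⟪g' p - g' a, p - p'⟫ ≤ ‖g' p - g' a‖ * ‖p - p'‖ := real_inner_le_norm _ _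
      _ ≤ (L * ‖p - a‖) * ((1 + γ * L) * ‖a - a'‖) :=
        mul_le_mul (hlip p a) (h.norm_sub_le h' hlip hγ) (norm_nonneg _)
          ((norm_nonneg _).trans (hlip p a))
      _ = L * (1 + γ * L) * (‖p - a‖ * ‖a - a'‖) := by ring
  have hhalf : 1 / (2 * γ) * (‖p - a‖ ^ 2 - ‖p' - a'‖ ^ 2)
      ≤ 1 / γ * ⟪p - a, p - a - (p' - a')⟫ := by
    have := mul_le_mul_of_nonneg_left hsq (by positivity : (0:ℝ) ≤ 1 / (2 * γ))
    field_simp at this ⊢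
    linarith
  linarith

theorem IsForwardBackwardStep.energy_le (h : IsForwardBackwardStep f g' γ a p)
    (hgsub : ∀ a, HasSubgradientAt g (g' a) a) (hlip : ∀ a b, ‖g' a - g' b‖ ≤ L * ‖a - b‖)
    (y : H) :
    f p + g p - (f y + g y) + 1 / (2 * γ) * ‖p - a‖ ^ 2
      ≤ 1 / γ * ⟪p - a, y - a⟫ + (L - 1 / (2 * γ)) * ‖p - a‖ ^ 2 := by
  have hf := h.sub_le_inner y
  have hgp := (hgsub p).sub_le_inner a
  have hga := (hgsub a).sub_le_inner y
  have hlin : ⟪(1 / γ) • (a - p) - g' a, p - y⟫ + ⟪g' p, p - a⟫ + ⟪g' a, a - y⟫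
      = ⟪g' p - g' a, p - a⟫ + 1 / γ * ⟪p - a, y - a⟫ - 1 / γ * ‖p - a‖ ^ 2 := by
    rw [show p - y = (p - a) - (y - a) by abel, show a - p = -(p - a) by abel,
      show a - y = -(y - a) by abel, ← real_inner_self_eq_norm_sq]
    simp only [inner_sub_right, inner_sub_left, inner_neg_left, inner_neg_right,
      real_inner_smul_left]
    ring
  have hcross : ⟪g' p - g' a, p - a⟫ ≤ L * ‖p - a‖ ^ 2 :=
    calc ⟪g' p - g' a, p - a⟫ ≤ ‖g' p - g' a‖ * ‖p - a‖ := real_inner_le_norm _ _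
      _ ≤ L * ‖p - a‖ * ‖p - a‖ := mul_le_mul_of_nonneg_right (hlip p a) (norm_nonneg _)
      _ = L * ‖p - a‖ ^ 2 := by ring
  have : 1 / γ * ‖p - a‖ ^ 2 = 2 * (1 / (2 * γ) * ‖p - a‖ ^ 2) := by ring
  linarith

noncomputable def forwardBackwardLyapunov (f g : H → ℝ) (γ : ℝ) (x u : ℝ → H) (xstar : H)
    (t : ℝ) : ℝ :=
  t * (f (u t) + g (u t) - (f xstar + g xstar) + 1 / (2 * γ) * ‖u t - x t‖ ^ 2)
    + 1 / (2 * γ) * ‖x t - xstar‖ ^ 2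

variable {x u : ℝ → H} {xstar : H}

theorem slope_forwardBackwardLyapunov_le
    (hu : ∀ t ≥ 0, IsForwardBackwardStep f g' γ (x t) (u t))
    (hgsub : ∀ a, HasSubgradientAt g (g' a) a) (hlip : ∀ a b, ‖g' a - g' b‖ ≤ L * ‖a - b‖)
    (hγ : 0 < γ) {s t : ℝ} (hs : 0 ≤ s) (hst : s < t) :
    slope (forwardBackwardLyapunov f g γ x u xstar) s t
      ≤ s * (L * (1 + γ * L) * (‖u t - x t‖ * ‖slope x s t‖)
            - 1 / γ * ⟪u t - x t, slope x s t⟫)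
        + (1 / γ * ⟪u t - x t, xstar - x t⟫ + (L - 1 / (2 * γ)) * ‖u t - x t‖ ^ 2)
        + 1 / γ * ⟪x t - xstar, slope x s t⟫ := by
  have hts : 0 < t - s := sub_pos.2 hst
  have ht : 0 ≤ t := hs.trans hst.le
  have hx : x t - x s = (t - s) • slope x s t := by
    rw [slope_def_module, smul_inv_smul₀ hts.ne']
  have hE₁ := (hu t ht).energy_sub_le (hu s hs) hgsub hlip hγ
  have hE₂ := (hu t ht).energy_le hgsub hlip xstar
  have hE₃ := norm_sq_sub_norm_sq_le_two_inner (x t - xstar) (x s - xstar)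
  rw [sub_sub_sub_cancel_right] at hE₃
  rw [hx, norm_smul, Real.norm_of_nonneg hts.le, real_inner_smul_right] at hE₁
  rw [hx, real_inner_smul_right] at hE₃
  rw [slope_def_field, div_le_iff₀ hts]
  unfold forwardBackwardLyapunov
  linear_combination s * hE₁ + (t - s) * hE₂ + 1 / (2 * γ) * hE₃

theorem continuousOn_of_isForwardBackwardStep
    (hxc : ContinuousOn x (Ici 0)) (hu : ∀ t ≥ 0, IsForwardBackwardStep f g' γ (x t) (u t))
    (hlip : ∀ a b, ‖g' a - g' b‖ ≤ L * ‖a - b‖) (hγ : 0 < γ) : ContinuousOn u (Ici 0) :=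
  hxc.of_norm_sub_le fun s hs t ht => (hu t ht).norm_sub_le (hu s hs) hlip hγ

theorem continuousOn_forwardBackwardLyapunov (hx : ∀ t ≥ 0, HasDerivAt x (u t - x t) t)
    (hu : ∀ t ≥ 0, IsForwardBackwardStep f g' γ (x t) (u t))
    (hgsub : ∀ a, HasSubgradientAt g (g' a) a) (hlip : ∀ a b, ‖g' a - g' b‖ ≤ L * ‖a - b‖)
    (hγ : 0 < γ) : ContinuousOn (forwardBackwardLyapunov f g γ x u xstar) (Ici 0) := by
  have hxc : ContinuousOn x (Ici 0) := fun t ht => (hx t ht).continuousAt.continuousWithinAt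
  have huc := continuousOn_of_isForwardBackwardStep hxc hu hlip hγ
  have hg'c : Continuous g' :=
    continuousOn_univ.1 (continuousOn_id.of_norm_sub_le fun a _ b _ => hlip b a)
  have hfc := continuousOn_comp_of_hasSubgradientAt hu huc
    (by fun_prop : ContinuousOn (fun t => (1 / γ) • (x t - u t) - g' (x t)) (Ici 0))
  have hgc := continuousOn_comp_of_hasSubgradientAt (fun t _ => hgsub (u t)) huc
    (hg'c.comp_continuousOn huc)
  unfold forwardBackwardLyapunov
  exact (continuousOn_id.mul (((hfc.add hgc).sub continuousOn_const).add
    (continuousOn_const.mul ((huc.sub hxc).norm.pow 2)))).add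
    (continuousOn_const.mul ((hxc.sub continuousOn_const).norm.pow 2))

theorem forwardBackwardLyapunov_le (hx : ∀ t ≥ 0, HasDerivAt x (u t - x t) t)
    (hu : ∀ t ≥ 0, IsForwardBackwardStep f g' γ (x t) (u t))
    (hgsub : ∀ a, HasSubgradientAt g (g' a) a) (hlip : ∀ a b, ‖g' a - g' b‖ ≤ L * ‖a - b‖)
    (hγ : 0 < γ) (hγL : γ * L * (1 + γ * L) ≤ 1) (hγL' : 2 * γ * L ≤ 1) {T : ℝ} (hT : 0 ≤ T) :
    forwardBackwardLyapunov f g γ x u xstar T ≤ forwardBackwardLyapunov f g γ x u xstar 0 := by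
  refine le_of_forall_eventually_slope_lt hT
    ((continuousOn_forwardBackwardLyapunov hx hu hgsub hlip hγ).mono Icc_subset_Ici_self)
    fun s hs r hr => ?_
  have hs₀ : 0 ≤ s := hs.1
  have hxc : ContinuousOn x (Ici 0) := fun t ht => (hx t ht).continuousAt.continuousWithinAt
  have huc := continuousOn_of_isForwardBackwardStep hxc hu hlip hγ
  have hright : 𝓝[>] s ≤ 𝓝[Ici 0] s := nhdsWithin_mono s fun t ht => hs₀.trans (le_of_lt ht)
  have hq : Tendsto (slope x s) (𝓝[>] s) (𝓝 (u s - x s)) :=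
    (hasDerivAt_iff_tendsto_slope.1 (hx s hs₀)).mono_left
      (nhdsWithin_mono s fun t ht => ne_of_gt ht)
  have hd : Tendsto (fun t => u t - x t) (𝓝[>] s) (𝓝 (u s - x s)) :=
    ((huc.sub hxc) s hs₀).tendsto.mono_left hright
  have hxt : Tendsto x (𝓝[>] s) (𝓝 (x s)) := (hxc s hs₀).tendsto.mono_left hright
  set Φ : H × H × H → ℝ := fun v =>
    s * (L * (1 + γ * L) * (‖v.1‖ * ‖v.2.1‖) - 1 / γ * ⟪v.1, v.2.1⟫)
      + (1 / γ * ⟪v.1, xstar - v.2.2⟫ + (L - 1 / (2 * γ)) * ‖v.1‖ ^ 2)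
      + 1 / γ * ⟪v.2.2 - xstar, v.2.1⟫ with hΦ_def
  have hΦ : Continuous Φ := by fun_prop
  have hΦ_nonpos : Φ (u s - x s, u s - x s, x s) ≤ 0 := by
    have h₁ : L * (1 + γ * L) - 1 / γ ≤ 0 := by
      rw [sub_nonpos, le_div_iff₀ hγ]; linarith
    have h₂ : L - 1 / (2 * γ) ≤ 0 := by
      rw [sub_nonpos, le_div_iff₀ (by positivity)]; linarith
    have hcancel : ⟪u s - x s, xstar - x s⟫ + ⟪x s - xstar, u s - x s⟫ = 0 := by
      rw [real_inner_comm _ (x s - xstar), ← inner_add_right, sub_add_sub_cancel, sub_self,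
        inner_zero_right]
    simp only [hΦ_def]
    rw [real_inner_self_eq_norm_sq]
    linear_combination
      mul_nonpos_of_nonneg_of_nonpos (mul_nonneg hs₀ (sq_nonneg ‖u s - x s‖)) h₁
      + mul_nonpos_of_nonneg_of_nonpos (sq_nonneg ‖u s - x s‖) h₂ + 1 / γ * hcancel
  have hev := ((hΦ.tendsto _).comp (hd.prodMk_nhds (hq.prodMk_nhds hxt))).eventually
    (gt_mem_nhds (hΦ_nonpos.trans_lt hr))
  filter_upwards [hev, self_mem_nhdsWithin] with t ht hst
  exact (slope_forwardBackwardLyapunov_le hu hgsub hlip hγ hs₀ hst).trans_lt ht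

end ForwardBackward

theorem stmt12_general
    {H : Type*} [NormedAddCommGroup H] [InnerProductSpace ℝ H]
    (f : H → ℝ)
    (g : H → ℝ) (g' : H → H)
    (hg_cvx : ∀ a b : H, g a + ⟪g' a, b - a⟫ ≤ g b)
    (β : ℝ) (hβ : 0 < β)
    (hg_lip : ∀ a b : H, ‖g' a - g' b‖ ≤ (1/β) * ‖a - b‖)
    (γ : ℝ) (hγ : 0 < γ) (hstep : (γ/β) * (3 + γ/β) ≤ 1)
    (x xd : ℝ → H) (x₀ : H) (hx0 : x 0 = x₀)
    (hx : ∀ t ≥ (0:ℝ), HasDerivAt x (xd t) t)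
    (hprox : ∀ t ≥ (0:ℝ), ∀ y : H,
      f (xd t + x t) + ⟪-((1/γ) • xd t) - g' (x t), y - (xd t + x t)⟫ ≤ f y)
    (xstar : H) (hmin : ∀ y : H, f xstar + g xstar ≤ f y + g y) :
    ∀ T > (0:ℝ),
      0 ≤ f (xd T + x T) + g (xd T + x T) - (f xstar + g xstar) +
        (1/(2*γ)) * ‖xd T‖ ^ 2 ∧
      f (xd T + x T) + g (xd T + x T) - (f xstar + g xstar) +
        (1/(2*γ)) * ‖xd T‖ ^ 2 ≤ (1/(2*γ*T)) * ‖x₀ - xstar‖ ^ 2 := by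
  intro T hT
  have hu : ∀ t ≥ (0:ℝ), IsForwardBackwardStep f g' γ (x t) (xd t + x t) := by
    intro t ht
    rw [IsForwardBackwardStep, sub_add_cancel_right, smul_neg]
    exact hprox t ht
  have hx' : ∀ t ≥ (0:ℝ), HasDerivAt x (xd t + x t - x t) t := by
    simpa only [add_sub_cancel_right] using hx
  have hγβ : 0 < γ / β := div_pos hγ hβ
  have hLyap := forwardBackwardLyapunov_le (xstar := xstar) hx' hu hg_cvx hg_lip hγ
    (by rw [mul_one_div]; nlinarith) (by rw [mul_assoc, mul_one_div]; nlinarith) hT.le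
  simp only [forwardBackwardLyapunov, add_sub_cancel_right, zero_mul, zero_add, hx0] at hLyap
  have hkin : 0 ≤ 1 / (2 * γ) * ‖xd T‖ ^ 2 := by positivity
  have hdist : 0 ≤ 1 / (2 * γ) * ‖x T - xstar‖ ^ 2 := by positivity
  refine ⟨by linarith [hmin (xd T + x T)], ?_⟩
  rw [show 1 / (2 * γ * T) * ‖x₀ - xstar‖ ^ 2 = 1 / (2 * γ) * ‖x₀ - xstar‖ ^ 2 / T by
    field_simp, le_div_iff₀ hT]
  linarith

/-- `O(1/T)` rate for the continuous forward–backward flow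
`ẋ(t) + x(t) = prox_{γf}(x(t) − γ∇g(x(t)))` (encoded by the subdifferential
characterization of the prox): for every `T > 0` and every minimizer `x*` of
`f+g`, `0 ≤ (f+g)(ẋ(T)+x(T)) − (f+g)(x*) + (1/(2γ))‖ẋ(T)‖² ≤ (1/(2γT))‖x₀−x*‖²`. -/
theorem stmt12
    {H : Type*} [NormedAddCommGroup H] [InnerProductSpace ℝ H] [CompleteSpace H]
    (f : H → ℝ) (hf_cvx : ConvexOn ℝ Set.univ f) (hf_lsc : LowerSemicontinuous f)
    (g : H → ℝ) (g' : H → H)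
    (hg_diff : ∀ z : H, HasGradientAt g (g' z) z)
    (hg_cvx : ∀ a b : H, g a + ⟪g' a, b - a⟫ ≤ g b)
    (β : ℝ) (hβ : 0 < β)
    (hg_lip : ∀ a b : H, ‖g' a - g' b‖ ≤ (1/β) * ‖a - b‖)
    (γ : ℝ) (hγ : 0 < γ) (hstep : (γ/β) * (3 + γ/β) ≤ 1)
    (x xd xdd : ℝ → H) (x₀ : H) (hx0 : x 0 = x₀)
    (hx : ∀ t ≥ (0:ℝ), HasDerivAt x (xd t) t)
    (hprox : ∀ t ≥ (0:ℝ), ∀ y : H,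
      f (xd t + x t) + ⟪-((1/γ) • xd t) - g' (x t), y - (xd t + x t)⟫ ≤ f y)
    (hxdd : ∀ᵐ t ∂(volume.restrict (Ici (0:ℝ))),
      HasDerivAt xd (xdd t) t ∧ ‖xdd t‖ ≤ (2 + γ/β) * ‖xd t‖)
    (hchain_f : ∀ᵐ t ∂(volume.restrict (Ici (0:ℝ))),
      HasDerivAt (fun s => f (xd s + x s))
        ⟪-((1/γ) • xd t) - g' (x t), xdd t + xd t⟫ t)
    (xstar : H) (hmin : ∀ y : H, f xstar + g xstar ≤ f y + g y) :
    ∀ T > (0:ℝ),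
      0 ≤ f (xd T + x T) + g (xd T + x T) - (f xstar + g xstar) +
        (1/(2*γ)) * ‖xd T‖ ^ 2 ∧
      f (xd T + x T) + g (xd T + x T) - (f xstar + g xstar) +
        (1/(2*γ)) * ‖xd T‖ ^ 2 ≤ (1/(2*γ*T)) * ‖x₀ - xstar‖ ^ 2 :=
  stmt12_general f g g' hg_cvx β hβ hg_lip γ hγ hstep x xd x₀ hx0 hx hprox xstar hmin
end

section
/- Nonconvex setting, square-integrable velocity: Let f : ℝⁿ → ℝ∪{+∞} be proper, convex, lsc, g : ℝⁿ → ℝ differentiable with β-Lipschitz gradient (β ≥ 0), suppose f+g is bounded below and η > 0 satisfies ηβ(3 + ηβ) < 1. Let x ∈ C¹([0,∞), ℝⁿ) be the unique global solution of ẋ(t) + x(t) = prox_{ηf}(x(t) − η∇g(x(t))), x(0) = x₀. Then ẋ ∈ L²([0,∞); ℝⁿ), lim_{t→∞} ẋ(t) = 0, and lim_{t→∞} (f+g)(ẋ(t)+x(t)) exists in ℝ. -/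
/-!
Along the flow the energy `W(t) = (f + g)(ẋ + x) + ‖ẋ‖² / (2η)` is a Lyapunov function.
Comparing the optimality conditions of the prox at two times shows that `ẋ` is
`(2 + ηβ)`-Lipschitz with respect to `x`. Together with the subgradient inequality for `f` and
the descent lemma for `g`, this bounds every increment `W(τ) - W(σ)` by
`(β(3 + ηβ) - 1/η) ∫_σ^τ ‖ẋ‖²` up to an `O((τ - σ)²)` error, which disappears when summed over
fine partitions. As `ηβ(3 + ηβ) < 1` the coefficient is negative: `W` decreases, so `ẋ ∈ L²`
and `ẋ` is bounded. Then `‖ẋ‖²` is Lipschitz, and a nonnegative integrable Lipschitz function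
tends to `0`. Finally `W` converges, being monotone and bounded below, and hence so does
`(f + g)(ẋ + x) = W - ‖ẋ‖² / (2η)`.
-/

open Filter MeasureTheory Set Topology
open scoped RealInnerProductSpace NNReal

lemma le_two_add_mul_of_sq_le {a b c : ℝ} (hb : 0 ≤ b) (hc : 0 ≤ c)
    (h : a ^ 2 ≤ (1 + c) * a * b + c * b ^ 2) : a ≤ (2 + c) * b := by
  by_contra! hlt
  have ha : 0 < a := lt_of_le_of_lt (by positivity) hlt
  -- `a² - (1 + c) a b - c b² = (a - (2 + c) b) (a + b) + 2 b²`
  nlinarith [mul_pos (sub_pos.2 hlt) (add_pos_of_pos_of_nonneg ha hb)]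

lemma le_of_forall_sub_le_mul_sq {D : ℝ → ℝ} {s t C : ℝ} (hst : s ≤ t)
    (h : ∀ σ τ, s ≤ σ → σ ≤ τ → τ ≤ t → D τ - D σ ≤ C * (τ - σ) ^ 2) : D t ≤ D s := by
  have hN : ∀ N : ℕ, D t - D s ≤ C * (t - s) ^ 2 / (N + 1) := by
    intro N
    set δ := (t - s) / (N + 1)
    have hδ : 0 ≤ δ := div_nonneg (sub_nonneg.2 hst) (by positivity)
    have hNδ : ((N : ℝ) + 1) * δ = t - s := by simp only [δ]; field_simp
    have hmem : ∀ i : ℕ, i ≤ N + 1 → s ≤ s + i * δ ∧ s + i * δ ≤ t := fun i hi => by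
      have : (i : ℝ) ≤ N + 1 := by exact_mod_cast hi
      constructor <;> nlinarith
    calc D t - D s = ∑ i ∈ Finset.range (N + 1), (D (s + (i + 1 : ℕ) * δ) - D (s + i * δ)) := by
          rw [Finset.sum_range_sub (fun i : ℕ => D (s + i * δ))]
          push_cast
          rw [hNδ, add_sub_cancel, zero_mul, add_zero]
      _ ≤ ∑ _i ∈ Finset.range (N + 1), C * δ ^ 2 := by
          refine Finset.sum_le_sum fun i hi => ?_
          have hi := Finset.mem_range.1 hi
          have := h _ _ (hmem i hi.le).1 (by push_cast; linarith) (hmem (i + 1) hi).2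
          push_cast at this ⊢
          simpa [add_mul, ← add_assoc] using this
      _ = C * (t - s) ^ 2 / (N + 1) := by
          rw [Finset.sum_const, Finset.card_range, nsmul_eq_mul, ← hNδ]
          push_cast
          field_simp
  have hlim : Tendsto (fun N : ℕ => C * (t - s) ^ 2 / ((N : ℝ) + 1)) atTop (𝓝 0) := by
    simpa [Function.comp_def] using
      (tendsto_const_div_atTop_nhds_zero_nat (C * (t - s) ^ 2)).comp (tendsto_add_atTop_nat 1)
  linarith [ge_of_tendsto' hlim hN]

lemma AntitoneOn.exists_tendsto_atTop {W : ℝ → ℝ} {a m : ℝ} (hW : AntitoneOn W (Ici a))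
    (hm : ∀ t ≥ a, m ≤ W t) : ∃ L, Tendsto W atTop (𝓝 L) := by
  have hanti : Antitone fun t => W (max t a) := fun s t hst =>
    hW (le_max_right s a) (le_max_right t a) (max_le_max_right a hst)
  refine ⟨_, (tendsto_atTop_ciInf hanti ⟨m, ?_⟩).congr' ?_⟩
  · rintro _ ⟨t, rfl⟩
    exact hm _ (le_max_right t a)
  · filter_upwards [eventually_ge_atTop a] with t ht
    rw [max_eq_left ht]

lemma tendsto_zero_of_integrableOn_Ioi_of_lipschitzOnWith {u : ℝ → ℝ} {a : ℝ} {K : ℝ≥0}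
    (hu : ∀ t ≥ a, 0 ≤ u t) (hint : IntegrableOn u (Ioi a)) (hK : LipschitzOnWith K u (Ici a)) :
    Tendsto u atTop (𝓝 0) := by
  set K' : ℝ := K + 1
  have hK' : 0 < K' := by positivity
  -- `u` stays above `u t / 2` on `[t, t + u t / (2K')]`
  have hsq : ∀ t ≥ a, u t ^ 2 ≤ 4 * K' * ∫ r in Ioi t, u r := by
    intro t ht
    set d := u t / (2 * K')
    have hd : 0 ≤ d := div_nonneg (hu t ht) (by positivity)
    have hlow : ∀ r ∈ Icc t (t + d), u t / 2 ≤ u r := by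
      intro r hr
      have h₁ := hK.dist_le_mul r (ht.trans hr.1 : a ≤ r) t ht
      rw [Real.dist_eq, Real.dist_eq, abs_of_nonneg (sub_nonneg.2 hr.1)] at h₁
      have h₂ : (K : ℝ) * (r - t) ≤ K' * d :=
        mul_le_mul (by simp [K']) (by linarith [hr.2]) (sub_nonneg.2 hr.1) hK'.le
      have h₃ : K' * d = u t / 2 := by simp only [d]; field_simp
      linarith [neg_abs_le (u r - u t)]
    have hint' : IntervalIntegrable u volume t (t + d) :=
      (intervalIntegrable_iff_integrableOn_Ioc_of_le (by linarith)).2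
        (hint.mono_set fun r hr => ht.trans_lt hr.1)
    calc u t ^ 2 = 4 * K' * (d * (u t / 2)) := by simp only [d]; field_simp; ring
      _ ≤ 4 * K' * ∫ r in t..(t + d), u r := by
          gcongr
          calc d * (u t / 2) = ∫ _ in t..(t + d), u t / 2 := by
                rw [intervalIntegral.integral_const, smul_eq_mul, add_sub_cancel_left]
            _ ≤ ∫ r in t..(t + d), u r :=
              intervalIntegral.integral_mono_on (by linarith) intervalIntegrable_const hint' hlow
      _ ≤ 4 * K' * ∫ r in Ioi t, u r := by
          gcongr
          rw [intervalIntegral.integral_of_le (by linarith)]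
          exact setIntegral_mono_set (hint.mono_set (Ioi_subset_Ioi ht))
            ((ae_restrict_iff' measurableSet_Ioi).2
              (Eventually.of_forall fun r hr => hu r (ht.trans (le_of_lt hr))))
            Ioc_subset_Ioi_self.eventuallyLE
  have htail := ((tendsto_integral_Ioi_zero (f := u) (μ := volume) tendsto_id).const_mul
    (4 * K')).sqrt
  rw [mul_zero, Real.sqrt_zero] at htail
  refine squeeze_zero' ((eventually_ge_atTop a).mono hu) ?_ htail
  filter_upwards [eventually_ge_atTop a] with t ht
  exact Real.le_sqrt_of_sq_le (hsq t ht)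

lemma abs_norm_sq_sub_norm_sq_le {E : Type*} [SeminormedAddCommGroup E] (a b : E) :
    |‖a‖ ^ 2 - ‖b‖ ^ 2| ≤ (‖a‖ + ‖b‖) * ‖a - b‖ := by
  rw [sq_sub_sq, abs_mul, abs_of_nonneg (by positivity)]
  gcongr
  exact abs_norm_sub_norm_le a b

variable {E : Type*} [NormedAddCommGroup E]

noncomputable def proxGradEnergy (f g : E → ℝ) (η : ℝ) (a v : E) : ℝ :=
  f (v + a) + g (v + a) + 1 / (2 * η) * ‖v‖ ^ 2

lemma le_proxGradEnergy {f g : E → ℝ} {m : ℝ} (hm : ∀ u, m ≤ f u + g u) (η : ℝ) (a v : E) :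
    m + 1 / (2 * η) * ‖v‖ ^ 2 ≤ proxGradEnergy f g η a v := by
  unfold proxGradEnergy; linarith [hm (v + a)]

variable [InnerProductSpace ℝ E]

lemma sub_le_inner_add_mul_norm_sq_of_hasGradientAt [CompleteSpace E] {g : E → ℝ} {g' : E → E}
    {β : ℝ} (hg : ∀ z, HasGradientAt g (g' z) z) (hlip : ∀ a b, ‖g' a - g' b‖ ≤ β * ‖a - b‖)
    (hβ : 0 ≤ β) (a b : E) : g b - g a ≤ ⟪g' b, b - a⟫ + β * ‖b - a‖ ^ 2 := by
  obtain ⟨z, hz, hmvt⟩ := domain_mvt (fun z _ => (hg z).hasFDerivAt.hasFDerivWithinAt)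
    convex_univ (mem_univ a) (mem_univ b)
  have hzb : ‖z - b‖ ≤ ‖b - a‖ := by
    rw [norm_sub_rev b a]; exact norm_sub_le_of_mem_segment (segment_symm ℝ a b ▸ hz)
  rw [hmvt, InnerProductSpace.toDual_apply_apply]
  calc ⟪g' z, b - a⟫ = ⟪g' b, b - a⟫ + ⟪g' z - g' b, b - a⟫ := by rw [inner_sub_left]; ring
    _ ≤ ⟪g' b, b - a⟫ + β * ‖b - a‖ * ‖b - a‖ := by
        gcongr
        refine (real_inner_le_norm _ _).trans ?_
        gcongr
        exact (hlip z b).trans (by gcongr)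
    _ = ⟪g' b, b - a⟫ + β * ‖b - a‖ ^ 2 := by ring

/-- `v + a = prox_{ηf}(a - η g' a)`, written as the optimality condition
`-(1/η) v - g' a ∈ ∂f(v + a)` of the proximal problem. -/
def IsProxGradStep (f : E → ℝ) (g' : E → E) (η : ℝ) (a v : E) : Prop :=
  ∀ y, f (v + a) + ⟪-((1 / η) • v) - g' a, y - (v + a)⟫ ≤ f y

namespace IsProxGradStep

variable {f g : E → ℝ} {g' : E → E} {η β : ℝ} {a v a₁ a₂ v₁ v₂ : E}

lemma sub_le_inner (h : IsProxGradStep f g' η a v) (z : E) :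
    f (v + a) - f z ≤ ⟪-((1 / η) • v) - g' a, v + a - z⟫ := by
  have := h z
  rw [← neg_sub (v + a) z, inner_neg_right] at this
  linarith

lemma inner_le_zero (h₁ : IsProxGradStep f g' η a₁ v₁) (h₂ : IsProxGradStep f g' η a₂ v₂) :
    ⟪(1 / η) • (v₂ - v₁) + (g' a₂ - g' a₁), (v₂ - v₁) + (a₂ - a₁)⟫ ≤ 0 := by
  have e₁ : v₂ + a₂ - (v₁ + a₁) = (v₂ - v₁) + (a₂ - a₁) := by abel
  have e₂ : v₁ + a₁ - (v₂ + a₂) = -((v₂ - v₁) + (a₂ - a₁)) := by abel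
  have e₃ : (1 / η) • (v₂ - v₁) + (g' a₂ - g' a₁)
      = (-((1 / η) • v₁) - g' a₁) - (-((1 / η) • v₂) - g' a₂) := by module
  have h₁₂ := h₁.sub_le_inner (v₂ + a₂)
  have h₂₁ := h₂.sub_le_inner (v₁ + a₁)
  rw [e₂, inner_neg_right] at h₁₂
  rw [e₁] at h₂₁
  rw [e₃, inner_sub_left]
  linarith

lemma norm_sub_le (h₁ : IsProxGradStep f g' η a₁ v₁) (h₂ : IsProxGradStep f g' η a₂ v₂)
    (hη : 0 < η) (hβ : 0 ≤ β) (hlip : ∀ a b, ‖g' a - g' b‖ ≤ β * ‖a - b‖) :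
    ‖v₂ - v₁‖ ≤ (2 + η * β) * ‖a₂ - a₁‖ := by
  set p := v₂ - v₁
  set q := a₂ - a₁
  have hmono := h₁.inner_le_zero h₂
  rw [inner_add_left, real_inner_smul_left, inner_add_right, real_inner_self_eq_norm_sq] at hmono
  have hpq : -(‖p‖ * ‖q‖) ≤ ⟪p, q⟫ := by
    have := real_inner_le_norm (-p) q
    rw [inner_neg_left, norm_neg] at this
    linarith
  have hg : -(β * ‖q‖ * (‖p‖ + ‖q‖)) ≤ ⟪g' a₂ - g' a₁, p + q⟫ := by
    have := real_inner_le_norm (-(g' a₂ - g' a₁)) (p + q)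
    rw [inner_neg_left, norm_neg] at this
    have : ‖g' a₂ - g' a₁‖ * ‖p + q‖ ≤ β * ‖q‖ * (‖p‖ + ‖q‖) :=
      mul_le_mul (hlip _ _) (norm_add_le p q) (norm_nonneg _) (by positivity)
    linarith
  refine le_two_add_mul_of_sq_le (norm_nonneg q) (by positivity) ?_
  have : (1 / η) * (‖p‖ ^ 2 + ⟪p, q⟫) ≤ β * ‖q‖ * (‖p‖ + ‖q‖) := by linarith
  rw [div_mul_eq_mul_div, one_mul, div_le_iff₀ hη] at this
  nlinarith

lemma energy_sub_le [CompleteSpace E] (h₁ : IsProxGradStep f g' η a₁ v₁)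
    (h₂ : IsProxGradStep f g' η a₂ v₂) (hg : ∀ z, HasGradientAt g (g' z) z)
    (hlip : ∀ a b, ‖g' a - g' b‖ ≤ β * ‖a - b‖) (hη : 0 < η) (hβ : 0 ≤ β) :
    proxGradEnergy f g η a₂ v₂ - proxGradEnergy f g η a₁ v₁ ≤
      β * (3 + η * β) * (‖v₂‖ * ‖a₂ - a₁‖) + β * (3 + η * β) ^ 2 * ‖a₂ - a₁‖ ^ 2
        - 1 / η * ⟪v₂, a₂ - a₁⟫ := by
  set p := v₂ - v₁
  set q := a₂ - a₁
  set w := v₂ + a₂ - (v₁ + a₁)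
  have hw : w = p + q := by simp only [w, p, q]; abel
  have hf := h₂.sub_le_inner (v₁ + a₁)
  have hg := sub_le_inner_add_mul_norm_sq_of_hasGradientAt hg hlip hβ (v₁ + a₁) (v₂ + a₂)
  have hv : 1 / (2 * η) * (‖v₂‖ ^ 2 - ‖v₁‖ ^ 2) ≤ 1 / η * ⟪v₂, p⟫ := by
    have : ‖v₂‖ ^ 2 - ‖v₁‖ ^ 2 = 2 * ⟪v₂, p⟫ - ‖p‖ ^ 2 := by
      rw [norm_sub_sq_real, inner_sub_right, real_inner_self_eq_norm_sq, real_inner_comm]; ring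
    rw [this, show 1 / η * ⟪v₂, p⟫ = 1 / (2 * η) * (2 * ⟪v₂, p⟫) by field_simp]
    gcongr
    linarith [sq_nonneg ‖p‖]
  have hw_le : ‖w‖ ≤ (3 + η * β) * ‖q‖ := by
    calc ‖w‖ ≤ ‖p‖ + ‖q‖ := hw ▸ norm_add_le p q
      _ ≤ (2 + η * β) * ‖q‖ + ‖q‖ := by gcongr; exact h₁.norm_sub_le h₂ hη hβ hlip
      _ = (3 + η * β) * ‖q‖ := by ring
  have hgrad : ⟪g' (v₂ + a₂) - g' a₂, w⟫ ≤ β * (3 + η * β) * (‖v₂‖ * ‖q‖) := by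
    calc ⟪g' (v₂ + a₂) - g' a₂, w⟫ ≤ β * ‖v₂‖ * ‖w‖ := by
          refine (real_inner_le_norm _ _).trans ?_
          gcongr
          simpa using hlip (v₂ + a₂) a₂
      _ ≤ β * ‖v₂‖ * ((3 + η * β) * ‖q‖) := by gcongr
      _ = β * (3 + η * β) * (‖v₂‖ * ‖q‖) := by ring
  have hw_sq : β * ‖w‖ ^ 2 ≤ β * (3 + η * β) ^ 2 * ‖q‖ ^ 2 := by
    rw [mul_assoc, ← mul_pow]; gcongr
  have hsplit : ⟪-((1 / η) • v₂) - g' a₂, w⟫ + ⟪g' (v₂ + a₂), w⟫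
      = ⟪g' (v₂ + a₂) - g' a₂, w⟫ - 1 / η * ⟪v₂, p⟫ - 1 / η * ⟪v₂, q⟫ := by
    rw [hw, inner_sub_left, inner_sub_left, inner_neg_left, real_inner_smul_left,
      inner_add_right, inner_add_right, inner_add_right]
    ring
  simp only [proxGradEnergy]
  linarith

end IsProxGradStep

structure IsProxGradTrajectory (f : E → ℝ) (g' : E → E) (η : ℝ) (x xd : ℝ → E) : Prop where
  hasDerivAt : ∀ t ≥ (0 : ℝ), HasDerivAt x (xd t) t
  continuous_deriv : Continuous xd
  isProxGradStep : ∀ t ≥ (0 : ℝ), IsProxGradStep f g' η (x t) (xd t)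

namespace IsProxGradTrajectory

variable {f g : E → ℝ} {g' : E → E} {η β M σ τ : ℝ} {x xd : ℝ → E} {S : Set ℝ}

lemma norm_sub_le (hT : IsProxGradTrajectory f g' η x xd) (hS : Convex ℝ S) (hS0 : S ⊆ Ici 0)
    (hM : ∀ r ∈ S, ‖xd r‖ ≤ M) (hσ : σ ∈ S) (hτ : τ ∈ S) : ‖x τ - x σ‖ ≤ M * |τ - σ| := by
  simpa using hS.norm_image_sub_le_of_norm_hasDerivWithin_le
    (fun r hr => (hT.hasDerivAt r (hS0 hr)).hasDerivWithinAt) hM hσ hτ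

lemma norm_deriv_sub_le (hT : IsProxGradTrajectory f g' η x xd) (hη : 0 < η) (hβ : 0 ≤ β)
    (hlip : ∀ a b, ‖g' a - g' b‖ ≤ β * ‖a - b‖) (hS : Convex ℝ S) (hS0 : S ⊆ Ici 0)
    (hM : ∀ r ∈ S, ‖xd r‖ ≤ M) (hσ : σ ∈ S) (hτ : τ ∈ S) :
    ‖xd τ - xd σ‖ ≤ (2 + η * β) * M * |τ - σ| := by
  calc ‖xd τ - xd σ‖ ≤ (2 + η * β) * ‖x τ - x σ‖ :=
        (hT.isProxGradStep σ (hS0 hσ)).norm_sub_le (hT.isProxGradStep τ (hS0 hτ)) hη hβ hlip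
    _ ≤ (2 + η * β) * (M * |τ - σ|) := by gcongr; exact hT.norm_sub_le hS hS0 hM hσ hτ
    _ = (2 + η * β) * M * |τ - σ| := by ring

lemma abs_norm_sq_deriv_sub_le (hT : IsProxGradTrajectory f g' η x xd) (hη : 0 < η)
    (hβ : 0 ≤ β) (hlip : ∀ a b, ‖g' a - g' b‖ ≤ β * ‖a - b‖) (hS : Convex ℝ S)
    (hS0 : S ⊆ Ici 0) (hM : ∀ r ∈ S, ‖xd r‖ ≤ M) (hσ : σ ∈ S) (hτ : τ ∈ S) :
    |‖xd τ‖ ^ 2 - ‖xd σ‖ ^ 2| ≤ 2 * (2 + η * β) * M ^ 2 * |τ - σ| := by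
  calc |‖xd τ‖ ^ 2 - ‖xd σ‖ ^ 2| ≤ (‖xd τ‖ + ‖xd σ‖) * ‖xd τ - xd σ‖ :=
        abs_norm_sq_sub_norm_sq_le _ _
    _ ≤ (M + M) * ((2 + η * β) * M * |τ - σ|) :=
        mul_le_mul (add_le_add (hM τ hτ) (hM σ hσ))
          (hT.norm_deriv_sub_le hη hβ hlip hS hS0 hM hσ hτ) (norm_nonneg _)
          (by linarith [(norm_nonneg _).trans (hM σ hσ)])
    _ = 2 * (2 + η * β) * M ^ 2 * |τ - σ| := by ring

lemma norm_sub_sub_smul_deriv_le (hT : IsProxGradTrajectory f g' η x xd) (hη : 0 < η)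
    (hβ : 0 ≤ β) (hlip : ∀ a b, ‖g' a - g' b‖ ≤ β * ‖a - b‖) (hS : Convex ℝ S)
    (hS0 : S ⊆ Ici 0) (hM : ∀ r ∈ S, ‖xd r‖ ≤ M) (hσ : σ ∈ S) (hτ : τ ∈ S) (hστ : σ ≤ τ) :
    ‖x τ - x σ - (τ - σ) • xd τ‖ ≤ (2 + η * β) * M * (τ - σ) ^ 2 := by
  have hsub : Icc σ τ ⊆ S := hS.ordConnected.out hσ hτ
  have hderiv : ∀ r ∈ Icc σ τ,
      HasDerivWithinAt (fun r => x r - r • xd τ) (xd r - xd τ) (Icc σ τ) r := fun r hr => by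
    simpa using ((hT.hasDerivAt r (hS0 (hsub hr))).fun_sub
      ((hasDerivAt_id r).smul_const (xd τ))).hasDerivWithinAt
  have hbound : ∀ r ∈ Icc σ τ, ‖xd r - xd τ‖ ≤ (2 + η * β) * M * (τ - σ) := fun r hr => by
    have hM0 : 0 ≤ M := (norm_nonneg _).trans (hM σ hσ)
    rw [norm_sub_rev]
    refine (hT.norm_deriv_sub_le hη hβ hlip hS hS0 hM (hsub hr) hτ).trans ?_
    rw [abs_of_nonneg (sub_nonneg.2 hr.2)]
    gcongr
    exact hr.1
  have := (convex_Icc σ τ).norm_image_sub_le_of_norm_hasDerivWithin_le hderiv hbound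
    (left_mem_Icc.2 hστ) (right_mem_Icc.2 hστ)
  rw [Real.norm_of_nonneg (sub_nonneg.2 hστ)] at this
  calc ‖x τ - x σ - (τ - σ) • xd τ‖ = ‖x τ - τ • xd τ - (x σ - σ • xd τ)‖ := by
        congr 1; module
    _ ≤ (2 + η * β) * M * (τ - σ) * (τ - σ) := this
    _ = (2 + η * β) * M * (τ - σ) ^ 2 := by ring

lemma abs_integral_norm_sq_deriv_sub_le (hT : IsProxGradTrajectory f g' η x xd) (hη : 0 < η)
    (hβ : 0 ≤ β) (hlip : ∀ a b, ‖g' a - g' b‖ ≤ β * ‖a - b‖) (hS : Convex ℝ S)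
    (hS0 : S ⊆ Ici 0) (hM : ∀ r ∈ S, ‖xd r‖ ≤ M) (hσ : σ ∈ S) (hτ : τ ∈ S) (hστ : σ ≤ τ) :
    |(∫ r in σ..τ, ‖xd r‖ ^ 2) - (τ - σ) * ‖xd τ‖ ^ 2| ≤ 2 * (2 + η * β) * M ^ 2 * (τ - σ) ^ 2 := by
  have hle : ∀ r ∈ uIoc σ τ, ‖‖xd r‖ ^ 2 - ‖xd τ‖ ^ 2‖ ≤ 2 * (2 + η * β) * M ^ 2 * (τ - σ) :=
    fun r hr => by
      rw [uIoc_of_le hστ] at hr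
      rw [Real.norm_eq_abs, abs_sub_comm]
      refine (hT.abs_norm_sq_deriv_sub_le hη hβ hlip hS hS0 hM
        (hS.ordConnected.out hσ hτ (Ioc_subset_Icc_self hr)) hτ).trans ?_
      rw [abs_of_nonneg (sub_nonneg.2 hr.2)]
      gcongr
      exact hr.1.le
  have hcont : Continuous fun r => ‖xd r‖ ^ 2 := hT.continuous_deriv.norm.pow 2
  have := intervalIntegral.norm_integral_le_of_norm_le_const hle
  rwa [intervalIntegral.integral_sub (hcont.intervalIntegrable σ τ) intervalIntegrable_const,
    intervalIntegral.integral_const, smul_eq_mul, Real.norm_eq_abs,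
    abs_of_nonneg (sub_nonneg.2 hστ), mul_assoc, ← sq] at this

lemma energy_sub_le_of_norm_le [CompleteSpace E] (hT : IsProxGradTrajectory f g' η x xd)
    (hg : ∀ z, HasGradientAt g (g' z) z) (hlip : ∀ a b, ‖g' a - g' b‖ ≤ β * ‖a - b‖)
    (hη : 0 < η) (hβ : 0 ≤ β) (hS : Convex ℝ S) (hS0 : S ⊆ Ici 0) (hM : ∀ r ∈ S, ‖xd r‖ ≤ M)
    (hσ : σ ∈ S) (hτ : τ ∈ S) (hστ : σ ≤ τ) :
    proxGradEnergy f g η (x τ) (xd τ) - proxGradEnergy f g η (x σ) (xd σ) ≤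
      (β * (3 + η * β) - 1 / η) * (τ - σ) * ‖xd τ‖ ^ 2 +
        ((β * (3 + η * β) + 1 / η) * (2 + η * β) * M ^ 2 + β * (3 + η * β) ^ 2 * M ^ 2)
          * (τ - σ) ^ 2 := by
  have hM0 : 0 ≤ M := (norm_nonneg _).trans (hM σ hσ)
  set h := τ - σ
  set v := xd τ
  set q := x τ - x σ
  set e := q - h • v
  have hv : ‖v‖ ≤ M := hM τ hτ
  have hq : ‖q‖ ≤ M * h := by
    simpa [abs_of_nonneg (sub_nonneg.2 hστ)] using hT.norm_sub_le hS hS0 hM hσ hτ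
  have hve : ‖v‖ * ‖e‖ ≤ (2 + η * β) * M ^ 2 * h ^ 2 := by
    calc ‖v‖ * ‖e‖ ≤ M * ((2 + η * β) * M * h ^ 2) := mul_le_mul hv
          (hT.norm_sub_sub_smul_deriv_le hη hβ hlip hS hS0 hM hσ hτ hστ) (norm_nonneg _) hM0
      _ = (2 + η * β) * M ^ 2 * h ^ 2 := by ring
  -- `q = h v + e` with `e = O(h²)`, so `⟪v, q⟫` and `‖v‖ ‖q‖` are both `h ‖v‖² + O(h²)`
  have hinner : h * ‖v‖ ^ 2 - ‖v‖ * ‖e‖ ≤ ⟪v, q⟫ := by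
    have hq' : ⟪v, q⟫ = h * ‖v‖ ^ 2 + ⟪v, e⟫ := by
      simp only [e, inner_sub_right, real_inner_smul_right, real_inner_self_eq_norm_sq]; ring
    linarith [neg_le_of_abs_le (abs_real_inner_le_norm v e)]
  have hnorm : ‖v‖ * ‖q‖ ≤ h * ‖v‖ ^ 2 + ‖v‖ * ‖e‖ := by
    have : ‖q‖ ≤ h * ‖v‖ + ‖e‖ := by
      calc ‖q‖ = ‖h • v + e‖ := by rw [add_sub_cancel]
        _ ≤ h * ‖v‖ + ‖e‖ := (norm_add_le _ _).trans_eq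
          (by rw [norm_smul, Real.norm_of_nonneg (sub_nonneg.2 hστ)])
    nlinarith [norm_nonneg v]
  have hstep := (hT.isProxGradStep σ (hS0 hσ)).energy_sub_le (hT.isProxGradStep τ (hS0 hτ))
    hg hlip hη hβ
  have h₁ := mul_le_mul_of_nonneg_left hnorm (by positivity : 0 ≤ β * (3 + η * β))
  have h₂ : β * (3 + η * β) ^ 2 * ‖q‖ ^ 2 ≤ β * (3 + η * β) ^ 2 * (M * h) ^ 2 := by gcongr
  have h₃ := mul_le_mul_of_nonneg_left hinner (one_div_nonneg.2 hη.le)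
  have h₄ := mul_le_mul_of_nonneg_left hve (by positivity : 0 ≤ β * (3 + η * β) + 1 / η)
  linarith

lemma energy_sub_le [CompleteSpace E] (hT : IsProxGradTrajectory f g' η x xd)
    (hg : ∀ z, HasGradientAt g (g' z) z) (hlip : ∀ a b, ‖g' a - g' b‖ ≤ β * ‖a - b‖)
    (hη : 0 < η) (hβ : 0 ≤ β) {s t : ℝ} (hs : 0 ≤ s) (hst : s ≤ t) :
    proxGradEnergy f g η (x t) (xd t) - proxGradEnergy f g η (x s) (xd s) ≤
      (β * (3 + η * β) - 1 / η) * ∫ r in s..t, ‖xd r‖ ^ 2 := by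
  set c := β * (3 + η * β) - 1 / η with hc_def
  obtain ⟨M, hM⟩ := isCompact_Icc.exists_bound_of_continuousOn
    (hT.continuous_deriv.continuousOn (s := Icc s t))
  have hS0 : Icc s t ⊆ Ici 0 := fun r hr => hs.trans hr.1
  have hcont : Continuous fun r => ‖xd r‖ ^ 2 := hT.continuous_deriv.norm.pow 2
  have := le_of_forall_sub_le_mul_sq (D := fun u =>
    proxGradEnergy f g η (x u) (xd u) - c * ∫ r in s..u, ‖xd r‖ ^ 2)
    (C := ((β * (3 + η * β) + 1 / η) * (2 + η * β) * M ^ 2 + β * (3 + η * β) ^ 2 * M ^ 2)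
      + |c| * (2 * (2 + η * β) * M ^ 2)) hst fun σ τ hsσ hστ hτt => by
    have hσ : σ ∈ Icc s t := ⟨hsσ, hστ.trans hτt⟩
    have hτ : τ ∈ Icc s t := ⟨hsσ.trans hστ, hτt⟩
    have hW := hT.energy_sub_le_of_norm_le hg hlip hη hβ (convex_Icc s t) hS0 hM hσ hτ hστ
    rw [← hc_def] at hW
    have hI := hT.abs_integral_norm_sq_deriv_sub_le hη hβ hlip (convex_Icc s t) hS0 hM hσ hτ hστ
    have hc := (neg_le_abs (c * ((∫ r in σ..τ, ‖xd r‖ ^ 2) - (τ - σ) * ‖xd τ‖ ^ 2))).trans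
      (abs_mul c _ ▸ mul_le_mul_of_nonneg_left hI (abs_nonneg c))
    have hsplit := intervalIntegral.integral_interval_sub_left
      (hcont.intervalIntegrable (μ := volume) s τ) (hcont.intervalIntegrable s σ)
    rw [← hsplit] at hc
    linarith
  simp only [intervalIntegral.integral_same, mul_zero, sub_zero] at this
  linarith

lemma lipschitzOnWith_norm_sq_deriv (hT : IsProxGradTrajectory f g' η x xd) (hη : 0 < η)
    (hβ : 0 ≤ β) (hlip : ∀ a b, ‖g' a - g' b‖ ≤ β * ‖a - b‖) (hS : Convex ℝ S)
    (hS0 : S ⊆ Ici 0) (hM : ∀ r ∈ S, ‖xd r‖ ≤ M) :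
    LipschitzOnWith (2 * (2 + η * β) * M ^ 2).toNNReal (fun t => ‖xd t‖ ^ 2) S :=
  LipschitzOnWith.of_dist_le' fun τ hτ σ hσ => by
    simpa only [Real.dist_eq] using hT.abs_norm_sq_deriv_sub_le hη hβ hlip hS hS0 hM hσ hτ

lemma antitoneOn_energy [CompleteSpace E] (hT : IsProxGradTrajectory f g' η x xd)
    (hg : ∀ z, HasGradientAt g (g' z) z) (hlip : ∀ a b, ‖g' a - g' b‖ ≤ β * ‖a - b‖)
    (hη : 0 < η) (hβ : 0 ≤ β) (hc : β * (3 + η * β) ≤ 1 / η) :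
    AntitoneOn (fun t => proxGradEnergy f g η (x t) (xd t)) (Ici 0) := fun s hs t _ hst => by
  have := hT.energy_sub_le hg hlip hη hβ hs hst
  have := mul_nonpos_of_nonpos_of_nonneg (sub_nonpos.2 hc)
    (intervalIntegral.integral_nonneg (μ := volume) hst fun r _ => sq_nonneg ‖xd r‖)
  simp only
  linarith

lemma integrableOn_norm_sq_deriv [CompleteSpace E] (hT : IsProxGradTrajectory f g' η x xd)
    (hg : ∀ z, HasGradientAt g (g' z) z) (hlip : ∀ a b, ‖g' a - g' b‖ ≤ β * ‖a - b‖)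
    (hη : 0 < η) (hβ : 0 ≤ β) (hc : β * (3 + η * β) < 1 / η) {m : ℝ}
    (hm : ∀ u, m ≤ f u + g u) :
    IntegrableOn (fun t => ‖xd t‖ ^ 2) (Ioi 0) := by
  set κ := 1 / η - β * (3 + η * β)
  set W₀ := proxGradEnergy f g η (x 0) (xd 0)
  refine integrableOn_Ioi_of_intervalIntegral_norm_bounded ((W₀ - m) / κ) 0
    (fun i : ℕ => (hT.continuous_deriv.norm.pow 2).integrableOn_Ioc) tendsto_natCast_atTop_atTop
    (Eventually.of_forall fun i => ?_)
  simp only [norm_pow, norm_norm]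
  rw [le_div_iff₀ (sub_pos.2 hc)]
  have := mul_nonneg (by positivity : 0 ≤ 1 / (2 * η)) (sq_nonneg ‖xd i‖)
  linarith [hT.energy_sub_le hg hlip hη hβ le_rfl i.cast_nonneg,
    le_proxGradEnergy hm η (x i) (xd i)]

lemma norm_deriv_le [CompleteSpace E] (hT : IsProxGradTrajectory f g' η x xd)
    (hg : ∀ z, HasGradientAt g (g' z) z) (hlip : ∀ a b, ‖g' a - g' b‖ ≤ β * ‖a - b‖)
    (hη : 0 < η) (hβ : 0 ≤ β) (hc : β * (3 + η * β) ≤ 1 / η) {m : ℝ}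
    (hm : ∀ u, m ≤ f u + g u) {t : ℝ} (ht : 0 ≤ t) :
    ‖xd t‖ ≤ √(2 * η * (proxGradEnergy f g η (x 0) (xd 0) - m)) := by
  refine Real.le_sqrt_of_sq_le ?_
  have : 1 / (2 * η) * ‖xd t‖ ^ 2 ≤ proxGradEnergy f g η (x 0) (xd 0) - m := by
    linarith [hT.antitoneOn_energy hg hlip hη hβ hc self_mem_Ici ht ht,
      le_proxGradEnergy hm η (x t) (xd t)]
  calc ‖xd t‖ ^ 2 = 2 * η * (1 / (2 * η) * ‖xd t‖ ^ 2) := by field_simp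
    _ ≤ 2 * η * (proxGradEnergy f g η (x 0) (xd 0) - m) := by gcongr

end IsProxGradTrajectory

theorem stmt14_general (n : ℕ)
    (f : EuclideanSpace ℝ (Fin n) → ℝ)
    (g : EuclideanSpace ℝ (Fin n) → ℝ) (g' : EuclideanSpace ℝ (Fin n) → EuclideanSpace ℝ (Fin n))
    (hg_diff : ∀ z, HasGradientAt g (g' z) z)
    (β : ℝ) (hβ : 0 ≤ β)
    (hg_lip : ∀ a b, ‖g' a - g' b‖ ≤ β * ‖a - b‖)
    (hbd : ∃ m : ℝ, ∀ u, m ≤ f u + g u)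
    (η : ℝ) (hη : 0 < η) (hstep : η * β * (3 + η * β) < 1)
    (x xd : ℝ → EuclideanSpace ℝ (Fin n))
    (hx : ∀ t ≥ (0:ℝ), HasDerivAt x (xd t) t) (hxd_cont : Continuous xd)
    (hprox : ∀ t ≥ (0:ℝ), ∀ y,
      f (xd t + x t) + ⟪-((1/η) • xd t) - g' (x t), y - (xd t + x t)⟫ ≤ f y) :
    IntegrableOn (fun t => ‖xd t‖ ^ 2) (Ici 0) ∧
    Tendsto xd atTop (𝓝 0) ∧
    ∃ L : ℝ, Tendsto (fun t => f (xd t + x t) + g (xd t + x t)) atTop (𝓝 L) := by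
  obtain ⟨m, hm⟩ := hbd
  have hT : IsProxGradTrajectory f g' η x xd := ⟨hx, hxd_cont, hprox⟩
  have hc : β * (3 + η * β) < 1 / η := by
    rw [lt_div_iff₀ hη]; linarith
  have hint := hT.integrableOn_norm_sq_deriv hg_diff hg_lip hη hβ hc hm
  have hsq : Tendsto (fun t => ‖xd t‖ ^ 2) atTop (𝓝 0) :=
    tendsto_zero_of_integrableOn_Ioi_of_lipschitzOnWith (fun _ _ => sq_nonneg _) hint
      (hT.lipschitzOnWith_norm_sq_deriv hη hβ hg_lip (convex_Ici 0) subset_rfl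
        fun _ ht => hT.norm_deriv_le hg_diff hg_lip hη hβ hc.le hm ht)
  obtain ⟨L, hL⟩ := (hT.antitoneOn_energy hg_diff hg_lip hη hβ hc.le).exists_tendsto_atTop
    fun t _ => (le_add_of_nonneg_right (by positivity)).trans (le_proxGradEnergy hm η _ _)
  refine ⟨by rwa [integrableOn_Ici_iff_integrableOn_Ioi], ?_, L, ?_⟩
  · rw [tendsto_zero_iff_norm_tendsto_zero]
    simpa using hsq.sqrt
  · simpa [proxGradEnergy] using hL.sub (hsq.const_mul (1 / (2 * η)))

/-- Nonconvex setting: along the flow `ẋ(t) + x(t) = prox_{ηf}(x(t) − η∇g(x(t)))`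
on `ℝⁿ` (encoded by the subdifferential characterization of the prox), with
`f` proper convex lsc, `∇g` β-Lipschitz (g possibly nonconvex), `f+g` bounded
below and `ηβ(3+ηβ) < 1`: `ẋ ∈ L²([0,∞))`, `ẋ(t) → 0`, and
`lim_{t→∞}(f+g)(ẋ(t)+x(t))` exists in `ℝ`. -/
theorem stmt14 (n : ℕ)
    (f : EuclideanSpace ℝ (Fin n) → ℝ)
    (hf_cvx : ConvexOn ℝ Set.univ f) (hf_lsc : LowerSemicontinuous f)
    (g : EuclideanSpace ℝ (Fin n) → ℝ) (g' : EuclideanSpace ℝ (Fin n) → EuclideanSpace ℝ (Fin n))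
    (hg_diff : ∀ z, HasGradientAt g (g' z) z)
    (β : ℝ) (hβ : 0 ≤ β)
    (hg_lip : ∀ a b, ‖g' a - g' b‖ ≤ β * ‖a - b‖)
    (hbd : ∃ m : ℝ, ∀ u, m ≤ f u + g u)
    (η : ℝ) (hη : 0 < η) (hstep : η * β * (3 + η * β) < 1)
    (x xd xdd : ℝ → EuclideanSpace ℝ (Fin n)) (x₀ : EuclideanSpace ℝ (Fin n))
    (hx0 : x 0 = x₀)
    (hx : ∀ t ≥ (0:ℝ), HasDerivAt x (xd t) t) (hxd_cont : Continuous xd)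
    (hprox : ∀ t ≥ (0:ℝ), ∀ y,
      f (xd t + x t) + ⟪-((1/η) • xd t) - g' (x t), y - (xd t + x t)⟫ ≤ f y)
    (hxdd : ∀ᵐ t ∂(volume.restrict (Ici (0:ℝ))),
      HasDerivAt xd (xdd t) t ∧ ‖xdd t‖ ≤ (2 + η * β) * ‖xd t‖)
    (hchain_f : ∀ᵐ t ∂(volume.restrict (Ici (0:ℝ))),
      HasDerivAt (fun s => f (xd s + x s))
        ⟪-((1/η) • xd t) - g' (x t), xdd t + xd t⟫ t) :
    IntegrableOn (fun t => ‖xd t‖ ^ 2) (Ici 0) ∧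
    Tendsto xd atTop (𝓝 0) ∧
    ∃ L : ℝ, Tendsto (fun t => f (xd t + x t) + g (xd t + x t)) atTop (𝓝 L) :=
  stmt14_general n f g g' hg_diff β hβ hg_lip hbd η hη hstep x xd hx hxd_cont hprox
end

section
/- Limit points are critical: In the setting of the flow ẋ(t) + x(t) = prox_{ηf}(x(t) − η∇g(x(t))) on ℝⁿ, with f proper convex lsc, ∇g β-Lipschitz, f+g bounded below and ηβ(3+ηβ) < 1, every limit point x̄ of the trajectory (i.e., x̄ = lim_k x(t_k) for some t_k → ∞) is a critical point of f+g: 0 ∈ ∂_L(f+g)(x̄), where ∂_L is the limiting (Mordukhovich) subdifferential. Moreover (f+g)(ẋ(t_k)+x(t_k)) → (f+g)(x̄). -/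
open Filter MeasureTheory Set Topology
open scoped RealInnerProductSpace

/-- The Fréchet (viscosity) subdifferential of `h` at `x`. -/
def frechetSubdiff {E : Type*} [NormedAddCommGroup E] [InnerProductSpace ℝ E]
    (h : E → ℝ) (x : E) : Set E :=
  {v | ∀ ε > (0:ℝ), ∀ᶠ y in nhds x, h x + ⟪v, y - x⟫ - ε * ‖y - x‖ ≤ h y}

/-- The limiting (Mordukhovich) subdifferential of `h` at `x`. -/
def limitingSubdiff {E : Type*} [NormedAddCommGroup E] [InnerProductSpace ℝ E]
    (h : E → ℝ) (x : E) : Set E :=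
  {v | ∃ xk vk : ℕ → E, Tendsto xk atTop (𝓝 x) ∧
    Tendsto (fun k => h (xk k)) atTop (𝓝 (h x)) ∧
    (∀ k, vk k ∈ frechetSubdiff h (xk k)) ∧ Tendsto vk atTop (𝓝 v)}

/-- Limit points of the trajectory of the flow
`ẋ(t) + x(t) = prox_{ηf}(x(t) − η∇g(x(t)))` are critical points of `f + g`:
if `x(t_k) → x̄` with `t_k → ∞`, then `0 ∈ ∂_L(f+g)(x̄)` and
`(f+g)(ẋ(t_k)+x(t_k)) → (f+g)(x̄)`. -/
theorem stmt15 (n : ℕ)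
    (f : EuclideanSpace ℝ (Fin n) → ℝ)
    (hf_cvx : ConvexOn ℝ Set.univ f) (hf_lsc : LowerSemicontinuous f)
    (g : EuclideanSpace ℝ (Fin n) → ℝ) (g' : EuclideanSpace ℝ (Fin n) → EuclideanSpace ℝ (Fin n))
    (hg_diff : ∀ z, HasGradientAt g (g' z) z)
    (β : ℝ) (hβ : 0 ≤ β)
    (hg_lip : ∀ a b, ‖g' a - g' b‖ ≤ β * ‖a - b‖)
    (hbd : ∃ m : ℝ, ∀ u, m ≤ f u + g u)
    (η : ℝ) (hη : 0 < η) (hstep : η * β * (3 + η * β) < 1)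
    (x xd xdd : ℝ → EuclideanSpace ℝ (Fin n))
    (hx : ∀ t ≥ (0:ℝ), HasDerivAt x (xd t) t) (hxd_cont : Continuous xd)
    (hprox : ∀ t ≥ (0:ℝ), ∀ y,
      f (xd t + x t) + ⟪-((1/η) • xd t) - g' (x t), y - (xd t + x t)⟫ ≤ f y)
    (hxdd : ∀ᵐ t ∂(volume.restrict (Ici (0:ℝ))),
      HasDerivAt xd (xdd t) t ∧ ‖xdd t‖ ≤ (2 + η * β) * ‖xd t‖)
    (hchain_f : ∀ᵐ t ∂(volume.restrict (Ici (0:ℝ))),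
      HasDerivAt (fun s => f (xd s + x s))
        ⟪-((1/η) • xd t) - g' (x t), xdd t + xd t⟫ t)
    (hxd0 : Tendsto xd atTop (𝓝 0))
    (xbar : EuclideanSpace ℝ (Fin n)) (tk : ℕ → ℝ)
    (htk_nonneg : ∀ k, 0 ≤ tk k) (htk : Tendsto tk atTop atTop)
    (hconv : Tendsto (fun k => x (tk k)) atTop (𝓝 xbar)) :
    (0 : EuclideanSpace ℝ (Fin n)) ∈ limitingSubdiff (fun u => f u + g u) xbar ∧
    Tendsto (fun k => f (xd (tk k) + x (tk k)) + g (xd (tk k) + x (tk k)))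
      atTop (𝓝 (f xbar + g xbar)) := by
  -- continuity facts
  have hf_cont : Continuous f := by
    have h := hf_cvx.continuousOn isOpen_univ
    exact continuousOn_univ.mp h
  have hg_cont : Continuous g := by
    rw [continuous_iff_continuousAt]
    exact fun z => (hg_diff z).hasFDerivAt.differentiableAt.continuousAt
  have hg'_cont : Continuous g' := by
    have : LipschitzWith β.toNNReal g' := by
      refine LipschitzWith.of_dist_le_mul fun a b => ?_
      rw [dist_eq_norm, Real.coe_toNNReal β hβ]
      exact hg_lip a b
    exact this.continuous
  set u : ℕ → EuclideanSpace ℝ (Fin n) := fun k => xd (tk k) + x (tk k) with hu_def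
  set v : ℕ → EuclideanSpace ℝ (Fin n) :=
    fun k => -((1/η) • xd (tk k)) - g' (x (tk k)) with hv_def
  have hxdk : Tendsto (fun k => xd (tk k)) atTop (𝓝 0) := hxd0.comp htk
  have hu : Tendsto u atTop (𝓝 xbar) := by
    have := hxdk.add hconv
    simpa using this
  have hfu : Tendsto (fun k => f (u k) + g (u k)) atTop (𝓝 (f xbar + g xbar)) :=
    ((hf_cont.tendsto xbar).comp hu).add ((hg_cont.tendsto xbar).comp hu)
  have hv_lim : Tendsto v atTop (𝓝 (-g' xbar)) := by
    have h1 : Tendsto (fun k => (1/η) • xd (tk k)) atTop (𝓝 (0 : EuclideanSpace ℝ (Fin n))) := by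
      simpa using hxdk.const_smul (1/η)
    have h2 : Tendsto (fun k => g' (x (tk k))) atTop (𝓝 (g' xbar)) :=
      (hg'_cont.tendsto xbar).comp hconv
    have h3 := (h1.neg).sub h2
    simp only [neg_zero, zero_sub] at h3
    exact h3
  have hw_lim : Tendsto (fun k => v k + g' (u k)) atTop (𝓝 0) := by
    have h2 : Tendsto (fun k => g' (u k)) atTop (𝓝 (g' xbar)) :=
      (hg'_cont.tendsto xbar).comp hu
    have := hv_lim.add h2
    simpa using this
  have hmem : ∀ k, v k + g' (u k) ∈ frechetSubdiff (fun z => f z + g z) (u k) := by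
    intro k ε hε
    have hlo := (hg_diff (u k)).hasFDerivAt.isLittleO
    filter_upwards [hlo.def hε] with y hy
    simp only [InnerProductSpace.toDual_apply_apply] at hy
    have hA : f (u k) + ⟪v k, y - u k⟫ ≤ f y := hprox (tk k) (htk_nonneg k) y
    have hB : g (u k) + ⟪g' (u k), y - u k⟫ - ε * ‖y - u k‖ ≤ g y := by
      rw [Real.norm_eq_abs] at hy
      have := (abs_le.mp hy).1
      linarith
    have hinner : ⟪v k + g' (u k), y - u k⟫ = ⟪v k, y - u k⟫ + ⟪g' (u k), y - u k⟫ :=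
      inner_add_left _ _ _
    simp only [hinner]
    linarith
  refine ⟨⟨u, fun k => v k + g' (u k), hu, ?_, hmem, hw_lim⟩, hfu⟩
  exact hfu
end

section
/- Subgradient bound for the Lyapunov function: Define H : ℝⁿ × ℝⁿ → ℝ∪{+∞} by H(u,v) = (f+g)(u) + (1/(2η))‖u−v‖². Along the solution of ẋ(t) + x(t) = prox_{ηf}(x(t) − η∇g(x(t))), the vector z(t) = (−∇g(x(t)) + ∇g(ẋ(t)+x(t)), −(1/η)ẋ(t)) belongs to ∂_L H(ẋ(t)+x(t), x(t)) for every t ≥ 0, and ‖z(t)‖ ≤ (β + 1/η)‖ẋ(t)‖. -/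
open Filter MeasureTheory Set Topology
open scoped RealInnerProductSpace

/-! The prox inclusion says that `-(1/η) ẋ - ∇g(x)` is a global, hence Fréchet, subgradient
of `f` at `u = ẋ + x`; adding the gradient `∇g(u)` gives a Fréchet subgradient of `f + g` at `u`.
Lifting it to the product and adding the gradient `(1/η)(u - v, v - u)` of the convex coupling term
gives `z` as a Fréchet subgradient of `H`, which is a limiting one along constant sequences. The
bound is the Lipschitz estimate for `∇g` plus the triangle inequality in the `L²` product. -/

open WithLp

theorem WithLp.norm_toLp_prod_le {p : ENNReal} [Fact (1 ≤ p)] {α β : Type*}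
    [SeminormedAddCommGroup α] [SeminormedAddCommGroup β] (a : α) (b : β) :
    ‖toLp p (a, b)‖ ≤ ‖a‖ + ‖b‖ := by
  have hsplit : toLp p (a, b) = toLp p (a, 0) + toLp p (0, b) := by
    rw [← toLp_add, Prod.mk_add_mk, add_zero, zero_add]
  rw [hsplit, ← norm_toLp_fst p α β a, ← norm_toLp_snd p α β b]
  exact norm_add_le _ _

section FrechetSubdiff

variable {E F : Type*} [NormedAddCommGroup E] [InnerProductSpace ℝ E]
  [NormedAddCommGroup F] [InnerProductSpace ℝ F]

theorem mem_frechetSubdiff_of_forall_le {h : E → ℝ} {x v : E}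
    (hv : ∀ y, h x + ⟪v, y - x⟫ ≤ h y) : v ∈ frechetSubdiff h x := fun ε hε =>
  Eventually.of_forall fun y => (sub_le_self _ (by positivity)).trans (hv y)

theorem HasGradientAt.mem_frechetSubdiff [CompleteSpace E] {h : E → ℝ} {x v : E}
    (hh : HasGradientAt h v x) : v ∈ frechetSubdiff h x := by
  intro ε hε
  filter_upwards [hh.hasFDerivAt.isLittleO.def hε] with y hy
  simp only [InnerProductSpace.toDual_apply_apply, Real.norm_eq_abs] at hy
  linarith [(abs_le.mp hy).1]

theorem add_mem_frechetSubdiff_add {h k : E → ℝ} {x v w : E}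
    (hv : v ∈ frechetSubdiff h x) (hw : w ∈ frechetSubdiff k x) :
    v + w ∈ frechetSubdiff (h + k) x := by
  intro ε hε
  filter_upwards [hv (ε / 2) (by positivity), hw (ε / 2) (by positivity)] with y hy hy'
  simp only [Pi.add_apply, inner_add_left]
  linarith

theorem frechetSubdiff_subset_limitingSubdiff (h : E → ℝ) (x : E) :
    frechetSubdiff h x ⊆ limitingSubdiff h x := fun v hv =>
  ⟨fun _ => x, fun _ => v, tendsto_const_nhds, tendsto_const_nhds, fun _ => hv,
    tendsto_const_nhds⟩

theorem mem_frechetSubdiff_comp_fst {h : E → ℝ} {u a : E} (v : F)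
    (ha : a ∈ frechetSubdiff h u) :
    toLp 2 (a, 0) ∈ frechetSubdiff (fun q : WithLp 2 (E × F) => h q.fst) (toLp 2 (u, v)) := by
  intro ε hε
  have hfst : Tendsto WithLp.fst (𝓝 (toLp 2 (u, v))) (𝓝 u) :=
    (WithLp.continuous_fst 2 E F).tendsto _
  filter_upwards [hfst.eventually (ha ε hε)] with q hq
  have hinner : ⟪toLp 2 (a, (0 : F)), q - toLp 2 (u, v)⟫ = ⟪a, q.fst - u⟫ := by simp
  have hnorm : ‖q.fst - u‖ ≤ ‖q - toLp 2 (u, v)‖ := WithLp.norm_fst_le E (q - toLp 2 (u, v))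
  rw [hinner, toLp_fst]
  linarith [mul_le_mul_of_nonneg_left hnorm hε.le]

theorem mem_frechetSubdiff_mul_sq_norm_sub {c : ℝ} (hc : 0 ≤ c) (u v : E) :
    toLp 2 ((2 * c) • (u - v), -((2 * c) • (u - v))) ∈
      frechetSubdiff (fun q : WithLp 2 (E × E) => c * ‖q.fst - q.snd‖ ^ 2) (toLp 2 (u, v)) := by
  refine mem_frechetSubdiff_of_forall_le fun q => ?_
  have hinner : ⟪toLp 2 ((2 * c) • (u - v), -((2 * c) • (u - v))), q - toLp 2 (u, v)⟫
      = 2 * c * ⟪u - v, (q.fst - q.snd) - (u - v)⟫ := by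
    change ⟪(2 * c) • (u - v), q.fst - u⟫ + ⟪-((2 * c) • (u - v)), q.snd - v⟫ = _
    simp only [inner_neg_left, real_inner_smul_left, inner_sub_right]
    ring
  have hsq := norm_sub_sq_real (q.fst - q.snd) (u - v)
  rw [hinner, toLp_fst, toLp_snd, inner_sub_right, real_inner_self_eq_norm_sq, real_inner_comm]
  nlinarith [mul_nonneg hc (sq_nonneg ‖(q.fst - q.snd) - (u - v)‖)]

end FrechetSubdiff

theorem stmt16_general (n : ℕ)
    (f : EuclideanSpace ℝ (Fin n) → ℝ)
    (g : EuclideanSpace ℝ (Fin n) → ℝ) (g' : EuclideanSpace ℝ (Fin n) → EuclideanSpace ℝ (Fin n))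
    (hg_diff : ∀ z, HasGradientAt g (g' z) z)
    (β : ℝ)
    (hg_lip : ∀ a b, ‖g' a - g' b‖ ≤ β * ‖a - b‖)
    (η : ℝ) (hη : 0 < η)
    (x xd : ℝ → EuclideanSpace ℝ (Fin n))
    (hprox : ∀ t ≥ (0:ℝ), ∀ y,
      f (xd t + x t) + ⟪-((1/η) • xd t) - g' (x t), y - (xd t + x t)⟫ ≤ f y)
    (Hfun : WithLp 2 (EuclideanSpace ℝ (Fin n) × EuclideanSpace ℝ (Fin n)) → ℝ)
    (hHfun : ∀ q : WithLp 2 (EuclideanSpace ℝ (Fin n) × EuclideanSpace ℝ (Fin n)),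
      Hfun q = f q.fst + g q.fst + (1/(2*η)) * ‖q.fst - q.snd‖ ^ 2)
    (z : ℝ → WithLp 2 (EuclideanSpace ℝ (Fin n) × EuclideanSpace ℝ (Fin n)))
    (hz : ∀ t : ℝ, z t = (WithLp.equiv 2 _).symm
      (-g' (x t) + g' (xd t + x t), -((1/η) • xd t))) :
    ∀ t ≥ (0:ℝ),
      z t ∈ limitingSubdiff Hfun ((WithLp.equiv 2 _).symm (xd t + x t, x t)) ∧
      ‖z t‖ ≤ (β + 1/η) * ‖xd t‖ := by
  intro t ht
  set u := xd t + x t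
  have hdiff : u - x t = xd t := add_sub_cancel_right _ _
  have hf := mem_frechetSubdiff_of_forall_le (hprox t ht)
  have hfg := add_mem_frechetSubdiff_add hf (hg_diff u).mem_frechetSubdiff
  have hH := add_mem_frechetSubdiff_add (mem_frechetSubdiff_comp_fst (x t) hfg)
    (mem_frechetSubdiff_mul_sq_norm_sub (c := 1 / (2 * η)) (by positivity) u (x t))
  have hHfun' : Hfun = (fun q => (f + g) q.fst) + fun q => 1 / (2 * η) * ‖q.fst - q.snd‖ ^ 2 :=
    funext fun q => hHfun q
  have hzt : z t = toLp 2 (-((1/η) • xd t) - g' (x t) + g' u, 0)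
      + toLp 2 ((2 * (1 / (2 * η))) • (u - x t), -((2 * (1 / (2 * η))) • (u - x t))) := by
    have hη2 : 2 * (1 / (2 * η)) = 1 / η := by field_simp
    rw [hz, WithLp.equiv_symm_apply, hη2, hdiff,
      ← toLp_add 2 (V := EuclideanSpace ℝ (Fin n) × EuclideanSpace ℝ (Fin n)),
      Prod.mk_add_mk, zero_add]
    congr 2
    abel
  refine ⟨frechetSubdiff_subset_limitingSubdiff _ _ (hHfun' ▸ hzt ▸ hH), ?_⟩
  calc ‖z t‖ ≤ ‖-g' (x t) + g' u‖ + ‖-((1/η) • xd t)‖ := hz t ▸ norm_toLp_prod_le _ _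
    _ ≤ β * ‖xd t‖ + 1 / η * ‖xd t‖ := by
      gcongr
      · simpa only [neg_add_eq_sub, hdiff] using hg_lip u (x t)
      · rw [norm_neg, norm_smul, Real.norm_of_nonneg (by positivity)]
    _ = (β + 1 / η) * ‖xd t‖ := by ring

/-- Subgradient bound for the Lyapunov function
`H(u,v) = (f+g)(u) + (1/(2η))‖u−v‖²`: along the flow
`ẋ(t) + x(t) = prox_{ηf}(x(t) − η∇g(x(t)))`, the vector
`z(t) = (−∇g(x(t)) + ∇g(ẋ(t)+x(t)), −(1/η)ẋ(t))` belongs to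
`∂_L H(ẋ(t)+x(t), x(t))` and `‖z(t)‖ ≤ (β + 1/η)‖ẋ(t)‖`. -/
theorem stmt16 (n : ℕ)
    (f : EuclideanSpace ℝ (Fin n) → ℝ)
    (hf_cvx : ConvexOn ℝ Set.univ f) (hf_lsc : LowerSemicontinuous f)
    (g : EuclideanSpace ℝ (Fin n) → ℝ) (g' : EuclideanSpace ℝ (Fin n) → EuclideanSpace ℝ (Fin n))
    (hg_diff : ∀ z, HasGradientAt g (g' z) z)
    (β : ℝ) (hβ : 0 ≤ β)
    (hg_lip : ∀ a b, ‖g' a - g' b‖ ≤ β * ‖a - b‖)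
    (η : ℝ) (hη : 0 < η)
    (x xd : ℝ → EuclideanSpace ℝ (Fin n))
    (hx : ∀ t ≥ (0:ℝ), HasDerivAt x (xd t) t)
    (hprox : ∀ t ≥ (0:ℝ), ∀ y,
      f (xd t + x t) + ⟪-((1/η) • xd t) - g' (x t), y - (xd t + x t)⟫ ≤ f y)
    (Hfun : WithLp 2 (EuclideanSpace ℝ (Fin n) × EuclideanSpace ℝ (Fin n)) → ℝ)
    (hHfun : ∀ q : WithLp 2 (EuclideanSpace ℝ (Fin n) × EuclideanSpace ℝ (Fin n)),
      Hfun q = f q.fst + g q.fst + (1/(2*η)) * ‖q.fst - q.snd‖ ^ 2)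
    (z : ℝ → WithLp 2 (EuclideanSpace ℝ (Fin n) × EuclideanSpace ℝ (Fin n)))
    (hz : ∀ t : ℝ, z t = (WithLp.equiv 2 _).symm
      (-g' (x t) + g' (xd t + x t), -((1/η) • xd t))) :
    ∀ t ≥ (0:ℝ),
      z t ∈ limitingSubdiff Hfun ((WithLp.equiv 2 _).symm (xd t + x t, x t)) ∧
      ‖z t‖ ≤ (β + 1/η) * ‖xd t‖ :=
  stmt16_general n f g g' hg_diff β hg_lip η hη x xd hprox Hfun hHfun z hz
end
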